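/- arXiv:0909.0645 — 5 statements merged into one kernel-verified Lean document; each statement's English description precedes it below -/
import Mathlib

section
/- Let X' : Ω' → [0,∞] be any function. Then Σ_{ω ∈ H} X'(f(ω)) · W(ω) · Q{ω} = Σ_{ω' ∈ H'} X'(ω') · P{ω'}, as an identity in [0,∞]. In particular, if X' : Ω' → ℝ and ω ↦ X'(f(ω)) W(ω) is Q-integrable on H, then E_Q[X'(f(·)) W(·); H] = E_P[X'; H']. -/
/-!
On the image space the weight `W = w ∘ f`, with `w a = P {a} / Q (f ⁻¹' {a})` (and `0` where the
denominator vanishes), is the density of `P` with respect to the pushforward `Q ∘ f⁻¹` on `H'`: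
both measures are determined by their point masses, and absolute continuity makes
`w a * Q (f ⁻¹' {a}) = P {a}` also where `Q (f ⁻¹' {a}) = 0`. Both identities are then the change
of variables along `f` followed by the change of measure `(Q ∘ f⁻¹).withDensity w = P` on `H'`.
-/

open MeasureTheory ENNReal

section PointMassRatio

variable {α : Type*} [MeasurableSpace α]

/-- The guard avoids the junk value `ν {a} / 0 = ∞`. -/
noncomputable def pointMassRatio (ν μ : Measure α) (a : α) : ℝ≥0∞ :=
  if μ {a} = 0 then 0 else ν {a} / μ {a}

theorem pointMassRatio_ne_top (ν μ : Measure α) [IsFiniteMeasure ν] (a : α) :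
    pointMassRatio ν μ a ≠ ∞ := by
  unfold pointMassRatio
  split_ifs with h
  · exact zero_ne_top
  · exact (ENNReal.div_lt_top (measure_ne_top ν _) h).ne

variable [Countable α] [MeasurableSingletonClass α]

theorem restrict_withDensity_pointMassRatio {ν μ : Measure α} [IsFiniteMeasure μ] {s : Set α}
    (hac : ∀ a ∈ s, μ {a} = 0 → ν {a} = 0) :
    (μ.withDensity (pointMassRatio ν μ)).restrict s = ν.restrict s := by
  refine Measure.ext_of_singleton fun a => ?_
  rw [Measure.restrict_apply (measurableSet_singleton a),
    Measure.restrict_apply (measurableSet_singleton a)]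
  by_cases ha : a ∈ s
  · rw [Set.singleton_inter_of_mem ha, withDensity_apply _ (measurableSet_singleton a),
      lintegral_singleton, pointMassRatio]
    split_ifs with h
    · rw [hac a ha h, zero_mul]
    · exact ENNReal.div_mul_cancel h (measure_ne_top μ _)
  · rw [Set.singleton_inter_of_notMem ha, measure_empty, measure_empty]

end PointMassRatio

section ChangeOfMeasure

variable {α β : Type*} [MeasurableSpace α] [Countable α] [MeasurableSingletonClass α]
  [MeasurableSpace β] {Q : Measure β} [IsFiniteMeasure Q] {ν : Measure α} {f : β → α}
  {s : Set α}

theorem restrict_withDensity_pointMassRatio_map (hf : Measurable f)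
    (hac : ∀ a ∈ s, Q (f ⁻¹' {a}) = 0 → ν {a} = 0) :
    ((Q.map f).withDensity (pointMassRatio ν (Q.map f))).restrict s = ν.restrict s :=
  restrict_withDensity_pointMassRatio fun a ha h =>
    hac a ha (by rwa [Measure.map_apply hf (measurableSet_singleton a)] at h)

theorem setLIntegral_comp_mul_pointMassRatio_map (hf : Measurable f)
    (hac : ∀ a ∈ s, Q (f ⁻¹' {a}) = 0 → ν {a} = 0) (g : α → ℝ≥0∞) :
    ∫⁻ b in f ⁻¹' s, g (f b) * pointMassRatio ν (Q.map f) (f b) ∂Q = ∫⁻ a in s, g a ∂ν := by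
  have hs : MeasurableSet s := s.to_countable.measurableSet
  calc ∫⁻ b in f ⁻¹' s, g (f b) * pointMassRatio ν (Q.map f) (f b) ∂Q
      = ∫⁻ a in s, (pointMassRatio ν (Q.map f) * g) a ∂Q.map f := by
        rw [setLIntegral_map hs (measurable_of_countable _) hf]
        simp only [Pi.mul_apply, mul_comm]
    _ = ∫⁻ a in s, g a ∂(Q.map f).withDensity (pointMassRatio ν (Q.map f)) :=
        (setLIntegral_withDensity_eq_setLIntegral_mul _ (measurable_of_countable _)
          (measurable_of_countable _) hs).symm
    _ = ∫⁻ a in s, g a ∂ν := by rw [restrict_withDensity_pointMassRatio_map hf hac]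

theorem setIntegral_comp_mul_pointMassRatio_map [IsFiniteMeasure ν] (hf : Measurable f)
    (hac : ∀ a ∈ s, Q (f ⁻¹' {a}) = 0 → ν {a} = 0) (g : α → ℝ) :
    ∫ b in f ⁻¹' s, g (f b) * (pointMassRatio ν (Q.map f) (f b)).toReal ∂Q
      = ∫ a in s, g a ∂ν := by
  have hs : MeasurableSet s := s.to_countable.measurableSet
  calc ∫ b in f ⁻¹' s, g (f b) * (pointMassRatio ν (Q.map f) (f b)).toReal ∂Q
      = ∫ a in s, (pointMassRatio ν (Q.map f) a).toReal • g a ∂Q.map f := by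
        rw [setIntegral_map hs (measurable_of_countable _).aestronglyMeasurable
          hf.aemeasurable]
        simp only [smul_eq_mul, mul_comm]
    _ = ∫ a in s, g a ∂(Q.map f).withDensity (pointMassRatio ν (Q.map f)) :=
        (setIntegral_withDensity_eq_setIntegral_toReal_smul (measurable_of_countable _)
          (ae_of_all _ fun a => (pointMassRatio_ne_top ν _ a).lt_top) g hs).symm
    _ = ∫ a in s, g a ∂ν := by rw [restrict_withDensity_pointMassRatio_map hf hac]

end ChangeOfMeasure

/-- Rao–Blackwell-type identity for importance sampling weights on countable spaces. -/
theorem stmt_0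
    {Ω Ω' : Type*} [Countable Ω] [Countable Ω']
    [MeasurableSpace Ω] [MeasurableSingletonClass Ω]
    [MeasurableSpace Ω'] [MeasurableSingletonClass Ω']
    (Q : Measure Ω) [IsProbabilityMeasure Q]
    (P : Measure Ω') [IsProbabilityMeasure P]
    (f : Ω → Ω') (H' : Set Ω')
    (habs : ∀ ω' ∈ H', Q (f ⁻¹' {ω'}) = 0 → P {ω'} = 0)
    (W : Ω → ℝ≥0∞)
    (hW : ∀ ω, W ω = if Q (f ⁻¹' {f ω}) = 0 then 0 else P {f ω} / Q (f ⁻¹' {f ω})) :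
    (∀ X' : Ω' → ℝ≥0∞,
        ∑' ω : (f ⁻¹' H' : Set Ω), X' (f ω.1) * W ω.1 * Q {ω.1}
          = ∑' ω' : H', X' ω'.1 * P {ω'.1}) ∧
    (∀ X' : Ω' → ℝ,
        IntegrableOn (fun ω => X' (f ω) * (W ω).toReal) (f ⁻¹' H') Q →
        ∫ ω in f ⁻¹' H', X' (f ω) * (W ω).toReal ∂Q = ∫ ω' in H', X' ω' ∂P) := by
  have hf : Measurable f := measurable_of_countable f
  have hW_eq : ∀ ω, W ω = pointMassRatio P (Q.map f) (f ω) := fun ω => by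
    rw [hW, pointMassRatio, Measure.map_apply hf (measurableSet_singleton _)]
  refine ⟨fun X' => ?_, fun X' _ => ?_⟩
  · simp only [hW_eq]
    exact (lintegral_countable _ (f ⁻¹' H').to_countable).symm.trans
      ((setLIntegral_comp_mul_pointMassRatio_map hf habs X').trans
        (lintegral_countable _ H'.to_countable))
  · simp only [hW_eq]
    exact setIntegral_comp_mul_pointMassRatio_map hf habs X'
end

section
/- (Mapping theorem for importance sampling, almost-sure convergence.) Assume in addition that Q(H) = 1, and let X' : Ω' → ℝ be such that ω ↦ X'(f(ω)) W(ω) is Q-integrable. Let (ω_i)_{i≥1} be an independent, identically distributed sequence of Ω-valued random variables with common law Q, defined on some probability space. Then, almost surely, r⁻¹ Σ_{i=1}^{r} X'(f(ω_i)) W(ω_i) → Σ_{ω' ∈ H'} X'(ω') P{ω'} = E_P[X'; H'] as r → ∞. -/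
open MeasureTheory ENNReal ProbabilityTheory Filter

/-!
Pushing `Q` forward along `f` and reweighting it by `w ω' = P{ω'} / Q(f⁻¹{ω'})` gives back `P`
on `H'` (absolute continuity is what makes the reweighting exact on points of `Q ∘ f⁻¹`-mass
zero). Since `Q` charges only `f⁻¹(H')`, the mean of `X' ∘ f · w ∘ f` under `Q` is therefore
`∫_{H'} X' dP`, and the strong law of large numbers applied to the i.i.d. samples
`X'(f ωᵢ) w(f ωᵢ)` finishes the proof.
-/

section ImportanceWeight

variable {Ω Ω' : Type*} [MeasurableSpace Ω] [MeasurableSpace Ω']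

noncomputable def importanceWeight (Q : Measure Ω) (P : Measure Ω') (f : Ω → Ω') (ω' : Ω') :
    ℝ≥0∞ :=
  if Q (f ⁻¹' {ω'}) = 0 then 0 else P {ω'} / Q (f ⁻¹' {ω'})

variable {Q : Measure Ω} {P : Measure Ω'} {f : Ω → Ω'}

theorem importanceWeight_ne_top [IsFiniteMeasure P] (ω' : Ω') :
    importanceWeight Q P f ω' ≠ ∞ := by
  unfold importanceWeight
  split_ifs with h
  · exact zero_ne_top
  · exact (ENNReal.div_lt_top (measure_ne_top P _) h).ne

theorem importanceWeight_mul_measure_preimage [IsFiniteMeasure Q] {ω' : Ω'}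
    (habs : Q (f ⁻¹' {ω'}) = 0 → P {ω'} = 0) :
    importanceWeight Q P f ω' * Q (f ⁻¹' {ω'}) = P {ω'} := by
  unfold importanceWeight
  split_ifs with h
  · rw [zero_mul, habs h]
  · exact ENNReal.div_mul_cancel h (measure_ne_top Q _)

variable [Countable Ω'] [MeasurableSingletonClass Ω']

theorem withDensity_importanceWeight_restrict [IsFiniteMeasure Q] (hf : Measurable f)
    {H' : Set Ω'} (habs : ∀ ω' ∈ H', Q (f ⁻¹' {ω'}) = 0 → P {ω'} = 0) :
    ((Q.map f).restrict H').withDensity (importanceWeight Q P f) = P.restrict H' := by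
  refine Measure.ext_of_singleton fun a => ?_
  rw [withDensity_apply _ (MeasurableSet.singleton a), lintegral_singleton,
    Measure.restrict_apply (MeasurableSet.singleton a),
    Measure.restrict_apply (MeasurableSet.singleton a)]
  by_cases ha : a ∈ H'
  · rw [Set.singleton_inter_of_mem ha, Measure.map_apply hf (MeasurableSet.singleton a)]
    exact importanceWeight_mul_measure_preimage (habs a ha)
  · simp [Set.singleton_inter_of_notMem ha]

theorem integral_comp_mul_importanceWeight [IsFiniteMeasure Q] [IsFiniteMeasure P]
    (hf : Measurable f) {H' : Set Ω'}
    (habs : ∀ ω' ∈ H', Q (f ⁻¹' {ω'}) = 0 → P {ω'} = 0) (hH : ∀ᵐ ω ∂Q, f ω ∈ H') (X' : Ω' → ℝ) :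
    ∫ ω, X' (f ω) * (importanceWeight Q P f (f ω)).toReal ∂Q =
      ∫ ω' in H', X' ω' ∂P := by
  have hconc : ∀ᵐ ω' ∂Q.map f, ω' ∈ H' :=
    (ae_map_iff hf.aemeasurable H'.to_countable.measurableSet).mpr hH
  calc ∫ ω, X' (f ω) * (importanceWeight Q P f (f ω)).toReal ∂Q
      = ∫ ω', (importanceWeight Q P f ω').toReal • X' ω' ∂(Q.map f).restrict H' := by
        rw [Measure.restrict_eq_self_of_ae_mem hconc,
          integral_map hf.aemeasurable (measurable_of_countable _).aestronglyMeasurable]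
        simp only [smul_eq_mul, mul_comm]
    _ = ∫ ω' in H', X' ω' ∂P := by
        rw [← integral_withDensity_eq_integral_toReal_smul (measurable_of_countable _)
          (ae_of_all _ fun ω' => (importanceWeight_ne_top ω').lt_top),
          withDensity_importanceWeight_restrict hf habs]

end ImportanceWeight

theorem ae_tendsto_average_comp_of_pairwise_indepFun {Ω Θ : Type*} [MeasurableSpace Ω]
    [MeasurableSpace Θ] {Q : Measure Ω} {μ : Measure Θ} {ωs : ℕ → Θ → Ω}
    (hmeas : ∀ i, Measurable (ωs i)) (hlaw : ∀ i, μ.map (ωs i) = Q)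
    (hindep : Pairwise fun i j => IndepFun (ωs i) (ωs j) μ)
    {Y : Ω → ℝ} (hY : Measurable Y) (hint : Integrable Y Q) :
    ∀ᵐ θ ∂μ, Tendsto (fun r : ℕ => (∑ i ∈ Finset.range r, Y (ωs i θ)) / r) atTop
      (nhds (∫ ω, Y ω ∂Q)) := by
  have hident : ∀ i, IdentDistrib (ωs i) (ωs 0) μ μ := fun i =>
    ⟨(hmeas i).aemeasurable, (hmeas 0).aemeasurable, by rw [hlaw i, hlaw 0]⟩
  have hint0 : Integrable (Y ∘ ωs 0) μ :=
    (integrable_map_measure hY.aestronglyMeasurable (hmeas 0).aemeasurable).mp (hlaw 0 ▸ hint)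
  have hmean : ∫ θ, Y (ωs 0 θ) ∂μ = ∫ ω, Y ω ∂Q := by
    rw [← hlaw 0, integral_map (hmeas 0).aemeasurable hY.aestronglyMeasurable]
  simpa only [Function.comp_apply, hmean] using strong_law_ae_real (fun i => Y ∘ ωs i) hint0
    (fun i j hij => (hindep hij).comp hY hY) (fun i => (hident i).comp hY)

theorem stmt_1_general
    {Ω Ω' : Type*} [Countable Ω] [Countable Ω']
    [MeasurableSpace Ω] [MeasurableSingletonClass Ω]
    [MeasurableSpace Ω'] [MeasurableSingletonClass Ω']
    (Q : Measure Ω) [IsProbabilityMeasure Q]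
    (P : Measure Ω') [IsProbabilityMeasure P]
    (f : Ω → Ω') (H' : Set Ω')
    (habs : ∀ ω' ∈ H', Q (f ⁻¹' {ω'}) = 0 → P {ω'} = 0)
    (W : Ω → ℝ≥0∞)
    (hW : ∀ ω, W ω = if Q (f ⁻¹' {f ω}) = 0 then 0 else P {f ω} / Q (f ⁻¹' {f ω}))
    (hH : Q (f ⁻¹' H') = 1)
    (X' : Ω' → ℝ)
    (hint : Integrable (fun ω => X' (f ω) * (W ω).toReal) Q)
    {Θ : Type*} [MeasurableSpace Θ] (μ : Measure Θ)
    (ωs : ℕ → Θ → Ω)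
    (hmeas : ∀ i, Measurable (ωs i))
    (hlaw : ∀ i, Measure.map (ωs i) μ = Q)
    (hindep : iIndepFun ωs μ) :
    ∀ᵐ θ ∂μ, Tendsto
      (fun r : ℕ => (∑ i ∈ Finset.range r, X' (f (ωs i θ)) * (W (ωs i θ)).toReal) / r)
      atTop (nhds (∫ ω' in H', X' ω' ∂P)) := by
  obtain rfl : W = importanceWeight Q P f ∘ f := funext hW
  have hH_ae : ∀ᵐ ω ∂Q, f ω ∈ H' :=
    (mem_ae_iff_prob_eq_one (Set.to_countable _).measurableSet).mpr hH
  rw [← integral_comp_mul_importanceWeight (measurable_of_countable f) habs hH_ae X']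
  exact ae_tendsto_average_comp_of_pairwise_indepFun hmeas hlaw
    (fun i j hij => hindep.indepFun hij) (measurable_of_countable _) hint

/-- Mapping theorem for importance sampling: almost-sure convergence. -/
theorem stmt_1
    {Ω Ω' : Type*} [Countable Ω] [Countable Ω']
    [MeasurableSpace Ω] [MeasurableSingletonClass Ω]
    [MeasurableSpace Ω'] [MeasurableSingletonClass Ω']
    (Q : Measure Ω) [IsProbabilityMeasure Q]
    (P : Measure Ω') [IsProbabilityMeasure P]
    (f : Ω → Ω') (H' : Set Ω')
    (habs : ∀ ω' ∈ H', Q (f ⁻¹' {ω'}) = 0 → P {ω'} = 0)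
    (W : Ω → ℝ≥0∞)
    (hW : ∀ ω, W ω = if Q (f ⁻¹' {f ω}) = 0 then 0 else P {f ω} / Q (f ⁻¹' {f ω}))
    (hH : Q (f ⁻¹' H') = 1)
    (X' : Ω' → ℝ)
    (hint : Integrable (fun ω => X' (f ω) * (W ω).toReal) Q)
    {Θ : Type*} [MeasurableSpace Θ] (μ : Measure Θ) [IsProbabilityMeasure μ]
    (ωs : ℕ → Θ → Ω)
    (hmeas : ∀ i, Measurable (ωs i))
    (hlaw : ∀ i, Measure.map (ωs i) μ = Q)
    (hindep : iIndepFun ωs μ) :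
    ∀ᵐ θ ∂μ, Tendsto
      (fun r : ℕ => (∑ i ∈ Finset.range r, X' (f (ωs i θ)) * (W (ωs i θ)).toReal) / r)
      atTop (nhds (∫ ω' in H', X' ω' ∂P)) :=
  stmt_1_general Q P f H' habs W hW hH X' hint μ ωs hmeas hlaw hindep
end

section
/- (Markov renewal identity for ladder variates, equation (2.1).) For every θ ∈ ℝ, every integer k ≥ 1, every j ∈ 𝔍 and every initial distribution γ on 𝔍, E_γ[ exp(θ T_{β(k)}) ; J_{β(k)} = j, β(k) < ∞ ] = (γ L_θᵏ)_j, as an identity in [0,∞], where γ L_θᵏ denotes the row vector γ multiplied by the k-th power of the matrix L_θ (matrix operations in [0,∞]). Consequently E_γ[ exp(θ T_{β(k)}) ; β(k) < ∞ ] = γ L_θᵏ 1ᵗ, where 1ᵗ is the column vector of ones. -/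
/-!
Restarting the path at time `m` (keep the state `J_m`, then continue with `Y_{m+1}, Y_{m+2}, …`)
turns, on `{β(k) = m}`, the epoch `β(k+1) - m` and the height `T_{β(k+1)} - T_m` into the first
ladder epoch and ladder height of the restarted path, while `{β(k) = m}` and `T_m` depend only on
the path up to time `m`. By the Markov property, obtained from the one-step hypothesis on box
cylinders and a π-λ argument, the restarted path has law `P_l` given `J_m = l` and the path up to
time `m`. Summing over `m` yields the renewal equation
`E_i[e^{θ T_{β(k+1)}}; J_{β(k+1)} = j] = Σ_l E_i[e^{θ T_{β(k)}}; J_{β(k)} = l] (L_θ)_{l,j}`,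
so these expectations are the entries of `L_θ^k`; averaging over `γ` gives both identities.
-/

open MeasureTheory ENNReal

/-- The partial sums `T_n = Σ_{m=0}^n Y_m` of the additive part of a trajectory. -/
noncomputable def Tsum {J : Type*} (ω : ℕ → J × ℝ) (n : ℕ) : ℝ :=
  ∑ m ∈ Finset.range (n + 1), (ω m).2

/-- Strict ascending ladder epochs of the sequence `(T_n)`, with value `⊤ = ∞` when
no further ladder epoch exists: `β(0) = 0` and
`β(k+1) = inf{n > β(k) : T_n > T_{β(k)}}` (`inf ∅ = ∞`). -/
noncomputable def ladder {J : Type*} (ω : ℕ → J × ℝ) : ℕ → ℕ∞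
  | 0 => 0
  | k + 1 =>
      ⨅ (n : ℕ) (_ : ∃ m : ℕ, ladder ω k = (m : ℕ∞) ∧ m < n ∧ Tsum ω m < Tsum ω n),
        (n : ℕ∞)

open Set

section Paths

variable {J : Type*}

lemma iInf_natCast_eq_iff {q : ℕ → Prop} {n : ℕ} :
    (⨅ (k : ℕ) (_ : q k), (k : ℕ∞)) = n ↔ q n ∧ ∀ m < n, ¬ q m := by
  classical
  constructor
  · intro h
    have hex : ∃ k, q k := by
      by_contra! hne
      simp [hne] at h
    have hfind : (⨅ (k : ℕ) (_ : q k), (k : ℕ∞)) = (Nat.find hex : ℕ) :=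
      le_antisymm (iInf₂_le _ (Nat.find_spec hex))
        (le_iInf₂ fun k hk => by exact_mod_cast Nat.find_min' hex hk)
    obtain rfl : n = Nat.find hex := by exact_mod_cast h.symm.trans hfind
    exact ⟨Nat.find_spec hex, fun m hm => Nat.find_min hex hm⟩
  · rintro ⟨hqn, hmin⟩
    refine le_antisymm (iInf₂_le _ hqn) (le_iInf₂ fun k hk => ?_)
    exact_mod_cast le_of_not_gt fun hlt => hmin k hlt hk

lemma ladder_succ_eq_iff (ω : ℕ → J × ℝ) (k n : ℕ) :
    ladder ω (k + 1) = n ↔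
      ∃ m : ℕ, ladder ω k = m ∧ m < n ∧ Tsum ω m < Tsum ω n ∧
        ∀ s, m < s → s < n → Tsum ω s ≤ Tsum ω m := by
  rw [ladder, iInf_natCast_eq_iff]
  constructor
  · rintro ⟨⟨m, hm, hmn, hT⟩, hmin⟩
    exact ⟨m, hm, hmn, hT, fun s hms hsn => not_lt.1 fun hTs => hmin s hsn ⟨m, hm, hms, hTs⟩⟩
  · rintro ⟨m, hm, hmn, hT, hnone⟩
    refine ⟨⟨m, hm, hmn, hT⟩, ?_⟩
    rintro s hsn ⟨m', hm', hm's, hT'⟩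
    obtain rfl : m' = m := by exact_mod_cast hm'.symm.trans hm
    exact (hnone s hm's hsn).not_gt hT'

lemma ladder_lt_ladder_succ {ω : ℕ → J × ℝ} {k m n : ℕ} (hm : ladder ω k = m)
    (hn : ladder ω (k + 1) = n) : m < n := by
  obtain ⟨m', hm', hlt, -⟩ := (ladder_succ_eq_iff ω k n).1 hn
  obtain rfl : m' = m := by exact_mod_cast hm'.symm.trans hm
  exact hlt

lemma ladder_one_eq_iff (ω : ℕ → J × ℝ) (n : ℕ) :
    ladder ω 1 = n ↔
      0 < n ∧ Tsum ω 0 < Tsum ω n ∧ ∀ s, 0 < s → s < n → Tsum ω s ≤ Tsum ω 0 := by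
  rw [ladder_succ_eq_iff]
  constructor
  · rintro ⟨m, hm, h⟩
    obtain rfl : m = 0 := by exact_mod_cast (hm.symm.trans rfl : (m : ℕ∞) = 0)
    exact h
  · exact fun h => ⟨0, rfl, h⟩

lemma Tsum_succ (ω : ℕ → J × ℝ) (n : ℕ) : Tsum ω (n + 1) = Tsum ω n + (ω (n + 1)).2 :=
  Finset.sum_range_succ _ _

lemma Tsum_congr {ω ω' : ℕ → J × ℝ} {n t : ℕ} (h : ∀ s ≤ n, ω s = ω' s) (ht : t ≤ n) :
    Tsum ω t = Tsum ω' t :=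
  Finset.sum_congr rfl fun m hm => by rw [h m (by grind)]

lemma ladder_congr {ω ω' : ℕ → J × ℝ} {k n : ℕ} (h : ∀ s ≤ n, ω s = ω' s)
    (hl : ladder ω k = n) : ladder ω' k = n := by
  induction k generalizing n with
  | zero => exact hl
  | succ k ih =>
    rw [ladder_succ_eq_iff] at hl ⊢
    obtain ⟨m, hm, hmn, hT, hmin⟩ := hl
    refine ⟨m, ih (fun s hs => h s (hs.trans hmn.le)) hm, hmn, ?_, fun s hms hsn => ?_⟩
    · rwa [← Tsum_congr h hmn.le, ← Tsum_congr h le_rfl]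
    · rw [← Tsum_congr h hmn.le, ← Tsum_congr h hsn.le]
      exact hmin s hms hsn

def stateSet (n : ℕ) (j : J) : Set (ℕ → J × ℝ) := {ω | (ω n).1 = j}

def stopped (m : ℕ) (ω : ℕ → J × ℝ) : ℕ → J × ℝ := fun n => ω (min n m)

lemma stopped_apply_of_le {m n : ℕ} (ω : ℕ → J × ℝ) (h : n ≤ m) : stopped m ω n = ω n := by
  simp [stopped, h]

lemma dependsOn_stopped (m : ℕ) : DependsOn (stopped (J := J) m) (Iic m) :=
  fun _ _ h => funext fun n => h _ (min_le_right n m)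

/-- The increment at time `0` is reset to `0`, so that the restarted path starts like a path under
`P (ω m).1`. -/
def restart (m : ℕ) (ω : ℕ → J × ℝ) : ℕ → J × ℝ
  | 0 => ((ω m).1, 0)
  | n + 1 => ω (m + (n + 1))

lemma restart_congr {m r : ℕ} {ω ω' : ℕ → J × ℝ} (h : ∀ s ≤ m + r, ω s = ω' s) :
    ∀ s ≤ r, restart m ω s = restart m ω' s
  | 0, _ => by simp [restart, h m (by omega)]
  | s + 1, hs => h _ (by omega)

lemma restart_fst (m : ℕ) (ω : ℕ → J × ℝ) (n : ℕ) : (restart m ω n).1 = (ω (m + n)).1 := by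
  cases n <;> rfl

lemma restart_zero_of_start {ω : ℕ → J × ℝ} {l : J} (h : ω 0 = (l, 0)) : restart 0 ω = ω := by
  funext n
  cases n with
  | zero => simp [restart, h]
  | succ n => simp [restart]

lemma Tsum_restart (m : ℕ) (ω : ℕ → J × ℝ) (r : ℕ) :
    Tsum (restart m ω) r = Tsum ω (m + r) - Tsum ω m := by
  induction r with
  | zero => simp [Tsum, restart]
  | succ r ih =>
    rw [Tsum_succ, ih, ← add_assoc, Tsum_succ (n := m + r)]
    simp only [restart, ← add_assoc]
    ring

lemma ladder_succ_eq_add_iff {ω : ℕ → J × ℝ} {k m : ℕ} (hm : ladder ω k = m) (r : ℕ) :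
    ladder ω (k + 1) = ↑(m + r) ↔ ladder (restart m ω) 1 = r := by
  rw [ladder_succ_eq_iff, ladder_one_eq_iff]
  simp only [Tsum_restart, add_zero, sub_self]
  constructor
  · rintro ⟨m', hm', hlt, hT, hmin⟩
    obtain rfl : m' = m := by exact_mod_cast hm'.symm.trans hm
    refine ⟨by omega, by linarith, fun s hs hsr => ?_⟩
    linarith [hmin (m' + s) (by omega) (by omega)]
  · rintro ⟨hr, hT, hmin⟩
    refine ⟨m, hm, by omega, by linarith, fun s hms hsn => ?_⟩
    have := hmin (s - m) (by omega) (by omega)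
    rw [Nat.add_sub_cancel' hms.le] at this
    linarith

noncomputable def ladderWeight (θ : ℝ) (k n : ℕ) : (ℕ → J × ℝ) → ℝ≥0∞ :=
  {ω | ladder ω k = n}.indicator fun ω => ENNReal.ofReal (Real.exp (θ * Tsum ω n))

lemma dependsOn_ladderWeight (θ : ℝ) (k n : ℕ) :
    DependsOn (ladderWeight (J := J) θ k n) (Iic n) := by
  intro ω ω' h
  have h' : ∀ s ≤ n, ω s = ω' s := h
  have hmem : (ladder ω k = n) ↔ (ladder ω' k = n) :=
    ⟨ladder_congr h', ladder_congr fun s hs => (h' s hs).symm⟩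
  simp only [ladderWeight, indicator, mem_ofPred_eq, hmem, Tsum_congr h' le_rfl]

lemma ladderWeight_of_ne {ω : ℕ → J × ℝ} {k n : ℕ} (h : ladder ω k ≠ n) (θ : ℝ) :
    ladderWeight θ k n ω = 0 :=
  indicator_of_notMem (show ω ∉ {ω : ℕ → J × ℝ | ladder ω k = n} from h) _

lemma ladderWeight_succ_add {ω : ℕ → J × ℝ} {k m : ℕ} (hm : ladder ω k = m) (θ : ℝ) (r : ℕ) :
    ladderWeight θ (k + 1) (m + r) ω = ladderWeight θ k m ω * ladderWeight θ 1 r (restart m ω) := by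
  simp only [ladderWeight, indicator, mem_ofPred_eq, hm, ladder_succ_eq_add_iff hm r, if_true]
  split_ifs
  · rw [← ENNReal.ofReal_mul (Real.exp_pos _).le, ← Real.exp_add, Tsum_restart]
    ring_nf
  · simp

lemma tsum_ladderWeight_succ (θ : ℝ) (k : ℕ) (j : J) (ω : ℕ → J × ℝ) :
    ∑' n, (stateSet n j).indicator (ladderWeight θ (k + 1) n) ω
      = ∑' m, ladderWeight θ k m ω
          * ∑' r, (stateSet r j).indicator (ladderWeight θ 1 r) (restart m ω) := by
  induction h : ladder ω k using ENat.recTopCoe with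
  | top =>
    have hk : ∀ m, ladderWeight θ k m ω = 0 := fun m => ladderWeight_of_ne (by simp [h]) θ
    have hk1 : ∀ n, ladderWeight θ (k + 1) n ω = 0 := fun n => ladderWeight_of_ne (fun hn => by
      obtain ⟨m, hm, -⟩ := (ladder_succ_eq_iff ω k n).1 hn
      simp [h] at hm) θ
    simp [hk, hk1]
  | coe m =>
    rw [tsum_eq_single (f := fun m' => ladderWeight θ k m' ω * _) m fun m' hm' => by
        rw [ladderWeight_of_ne (by simpa [h] using hm'.symm), zero_mul],
      ← ENNReal.tsum_mul_left, ← (add_right_injective m).tsum_eq]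
    · refine tsum_congr fun r => ?_
      classical
      rw [indicator_apply, indicator_apply]
      simp only [stateSet, mem_ofPred_eq, restart_fst, ladderWeight_succ_add h]
      split_ifs <;> simp
    · intro n hn
      have hn' : ladder ω (k + 1) = n := by
        by_contra hne
        simp [ladderWeight_of_ne hne] at hn
      exact ⟨n - m, by simp [Nat.add_sub_cancel' (ladder_lt_ladder_succ h hn').le]⟩

end Paths

section Markov

variable {J : Type*} [MeasurableSpace J]

lemma measurable_Tsum (n : ℕ) : Measurable fun ω : ℕ → J × ℝ => Tsum ω n :=
  Finset.measurable_sum _ fun m _ => (measurable_pi_apply m).snd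

lemma measurable_ladder_eq (k n : ℕ) : Measurable fun ω : ℕ → J × ℝ => ladder ω k = n := by
  induction k generalizing n with
  | zero => exact measurable_const (a := (0 : ℕ∞) = n)
  | succ k ih =>
    simp_rw [ladder_succ_eq_iff]
    have hlt : ∀ a b : ℕ, Measurable fun ω : ℕ → J × ℝ => Tsum ω a < Tsum ω b := fun a b =>
      measurableSet_setOfPred.1 (measurableSet_lt (measurable_Tsum a) (measurable_Tsum b))
    have hle : ∀ a b : ℕ, Measurable fun ω : ℕ → J × ℝ => Tsum ω a ≤ Tsum ω b := fun a b =>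
      measurableSet_setOfPred.1 (measurableSet_le (measurable_Tsum a) (measurable_Tsum b))
    fun_prop

lemma measurableSet_stateSet [MeasurableSingletonClass J] (n : ℕ) (j : J) :
    MeasurableSet (stateSet n j : Set (ℕ → J × ℝ)) :=
  (measurable_pi_apply n).fst (measurableSet_singleton j)

lemma measurable_restart (m : ℕ) : Measurable (restart (J := J) m) := by
  refine measurable_pi_lambda _ fun n => ?_
  cases n with
  | zero => exact (measurable_pi_apply m).fst.prodMk measurable_const
  | succ n => exact measurable_pi_apply _

lemma measurable_stopped (m : ℕ) : Measurable (stopped (J := J) m) :=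
  measurable_pi_lambda _ fun _ => measurable_pi_apply _

structure IsMarkovRandomWalk [Fintype J] (p : J → J → ℝ≥0∞) (μ : J → J → Measure ℝ)
    (P : J → Measure (ℕ → J × ℝ)) : Prop where
  isProbabilityMeasure : ∀ i, IsProbabilityMeasure (P i)
  start : ∀ i, P i {ω | ω 0 = (i, 0)} = 1
  step : ∀ i n (C : Set (ℕ → J × ℝ)), MeasurableSet C → DependsOn (· ∈ C) (Iic n) →
    ∀ k (B : Set ℝ), MeasurableSet B →
      P i (C ∩ {ω | (ω (n + 1)).1 = k ∧ (ω (n + 1)).2 ∈ B})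
        = ∑ j, p j k * μ j k B * P i (C ∩ {ω | (ω n).1 = j})

lemma measure_eq_sum_stateSet [Fintype J] [MeasurableSingletonClass J]
    (Q : Measure (ℕ → J × ℝ)) {E : Set (ℕ → J × ℝ)} (hE : MeasurableSet E) (n : ℕ) :
    Q E = ∑ j, Q (E ∩ stateSet n j) := by
  rw [← measure_biUnion_finset (fun j _ j' _ hne => Set.disjoint_left.2 fun ω h h' =>
      hne (h.2.symm.trans h'.2)) fun j _ => hE.inter (measurableSet_stateSet n j)]
  congr 1
  ext ω
  simp [stateSet]

open Classical in
lemma measure_restart_pi_zero (Q : Measure (ℕ → J × ℝ)) (C : Set (ℕ → J × ℝ)) (m : ℕ)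
    (l j : J) (A : ℕ → Set (J × ℝ)) :
    Q (C ∩ stateSet m l ∩ restart m ⁻¹' (Iic 0).pi A ∩ stateSet (m + 0) j)
      = if j = l ∧ (l, 0) ∈ A 0 then Q (C ∩ stateSet m l) else 0 := by
  split_ifs with h
  · obtain ⟨rfl, hA⟩ := h
    congr 1
    ext ω
    simp +contextual [stateSet, restart, hA]
  · convert measure_empty (μ := Q)
    ext ω
    simp only [stateSet, mem_inter_iff, mem_ofPred_eq, mem_preimage, mem_pi, mem_Iic,
      nonpos_iff_eq_zero, forall_eq, add_zero, mem_empty_iff_false, iff_false]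
    rintro ⟨⟨⟨-, hl⟩, hA⟩, hj⟩
    exact h ⟨hj.symm.trans hl, by simpa [restart, hl] using hA⟩

namespace IsMarkovRandomWalk

variable [Fintype J] {p : J → J → ℝ≥0∞} {μ : J → J → Measure ℝ} {P : J → Measure (ℕ → J × ℝ)}

lemma measure_stateSet_zero (hP : IsMarkovRandomWalk p μ P) (l : J) :
    P l (stateSet 0 l) = 1 := by
  have := hP.isProbabilityMeasure l
  refine le_antisymm prob_le_one ((hP.start l).symm.trans_le (measure_mono fun ω hω => ?_))
  simp_all [stateSet]

variable [MeasurableSingletonClass J]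

lemma ae_start (hP : IsMarkovRandomWalk p μ P) (i : J) : ∀ᵐ ω ∂P i, ω 0 = (i, 0) := by
  have := hP.isProbabilityMeasure i
  have hs : MeasurableSet {ω : ℕ → J × ℝ | ω 0 = (i, 0)} :=
    (measurable_pi_apply 0) (measurableSet_singleton _)
  rw [ae_iff, ← compl_ofPred, prob_compl_eq_zero_iff hs]
  exact hP.start i

lemma measure_restart_pi_succ (hP : IsMarkovRandomWalk p μ P) (i l j : J) {m : ℕ}
    {C : Set (ℕ → J × ℝ)} (hC : MeasurableSet C) (hCm : DependsOn (· ∈ C) (Iic m))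
    {A : ℕ → Set (J × ℝ)} (hA : ∀ n, MeasurableSet (A n)) (r : ℕ) :
    P i (C ∩ stateSet m l ∩ restart m ⁻¹' (Iic (r + 1)).pi A ∩ stateSet (m + (r + 1)) j)
      = ∑ j', p j' j * μ j' j {y | (j, y) ∈ A (r + 1)}
          * P i (C ∩ stateSet m l ∩ restart m ⁻¹' (Iic r).pi A ∩ stateSet (m + r) j') := by
  set D := C ∩ stateSet m l ∩ restart m ⁻¹' (Iic r).pi A
  have hD : MeasurableSet D := (hC.inter (measurableSet_stateSet m l)).inter
    (measurable_restart m (MeasurableSet.pi (to_countable _) fun n _ => hA n))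
  have hDm : DependsOn (· ∈ D) (Iic (m + r)) := by
    intro ω ω' h
    have h' : ∀ s ≤ m + r, ω s = ω' s := h
    have hC' : (ω ∈ C) = (ω' ∈ C) := hCm fun s hs => h' s (by simp only [mem_Iic] at hs; omega)
    simp only [D, stateSet, mem_inter_iff, mem_ofPred_eq, mem_preimage, mem_pi, mem_Iic, hC',
      h' m (by omega)]
    congr! 3 with s hs
    rw [restart_congr h' s hs]
  set B : Set ℝ := {y | (j, y) ∈ A (r + 1)}
  have hB : MeasurableSet B := measurable_prodMk_left (hA (r + 1))
  have hsplit : C ∩ stateSet m l ∩ restart m ⁻¹' (Iic (r + 1)).pi A ∩ stateSet (m + (r + 1)) j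
      = D ∩ {ω | (ω (m + r + 1)).1 = j ∧ (ω (m + r + 1)).2 ∈ B} := by
    ext ω
    simp only [D, B, stateSet, mem_inter_iff, mem_ofPred_eq, mem_preimage, mem_pi, mem_Iic,
      Nat.le_succ_iff, or_imp, forall_and, forall_eq]
    have hlast : restart m ω (r + 1) = ω (m + r + 1) := rfl
    rw [Nat.succ_eq_add_one, hlast, ← add_assoc]
    obtain ⟨a, y⟩ := ω (m + r + 1)
    constructor
    · rintro ⟨⟨hCl, hr, hA⟩, rfl⟩
      exact ⟨⟨hCl, hr⟩, rfl, hA⟩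
    · rintro ⟨⟨hCl, hr⟩, rfl, hA⟩
      exact ⟨⟨hCl, hr, hA⟩, rfl⟩
  rw [hsplit, hP.step i (m + r) D hD hDm j B hB]
  rfl

lemma measure_restart_pi_stateSet (hP : IsMarkovRandomWalk p μ P) (i l : J) {m : ℕ}
    {C : Set (ℕ → J × ℝ)} (hC : MeasurableSet C) (hCm : DependsOn (· ∈ C) (Iic m))
    {A : ℕ → Set (J × ℝ)} (hA : ∀ n, MeasurableSet (A n)) (r : ℕ) (j : J) :
    P i (C ∩ stateSet m l ∩ restart m ⁻¹' (Iic r).pi A ∩ stateSet (m + r) j)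
      = P i (C ∩ stateSet m l)
          * P l (univ ∩ stateSet 0 l ∩ restart 0 ⁻¹' (Iic r).pi A ∩ stateSet (0 + r) j) := by
  -- both sides obey the recursion `measure_restart_pi_succ` in `r`
  induction r generalizing j with
  | zero =>
    rw [measure_restart_pi_zero, measure_restart_pi_zero, univ_inter, hP.measure_stateSet_zero]
    split_ifs <;> simp
  | succ r ih =>
    rw [hP.measure_restart_pi_succ i l j hC hCm hA,
      hP.measure_restart_pi_succ l l j MeasurableSet.univ (fun _ _ _ => rfl) hA, Finset.mul_sum]
    refine Finset.sum_congr rfl fun j' _ => ?_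
    rw [ih]
    ring

lemma measure_restart_pi (hP : IsMarkovRandomWalk p μ P) (i l : J) {m : ℕ}
    {C : Set (ℕ → J × ℝ)} (hC : MeasurableSet C) (hCm : DependsOn (· ∈ C) (Iic m))
    {A : ℕ → Set (J × ℝ)} (hA : ∀ n, MeasurableSet (A n)) (r : ℕ) :
    P i (C ∩ stateSet m l ∩ restart m ⁻¹' (Iic r).pi A)
      = P i (C ∩ stateSet m l) * P l ((Iic r).pi A) := by
  have hpi : MeasurableSet ((Iic r).pi A) := MeasurableSet.pi (to_countable _) fun n _ => hA n
  have hrestart : P l ((Iic r).pi A) = P l (univ ∩ stateSet 0 l ∩ restart 0 ⁻¹' (Iic r).pi A) := by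
    refine measure_congr ?_
    filter_upwards [hP.ae_start l] with ω hω
    change (ω ∈ (Iic r).pi A) = (ω ∈ univ ∩ stateSet 0 l ∩ restart 0 ⁻¹' (Iic r).pi A)
    simp [stateSet, hω, restart_zero_of_start hω]
  rw [hrestart, measure_eq_sum_stateSet _ ((hC.inter (measurableSet_stateSet m l)).inter
      (measurable_restart m hpi)) (m + r),
    measure_eq_sum_stateSet _ ((MeasurableSet.univ.inter (measurableSet_stateSet 0 l)).inter
      (measurable_restart 0 hpi)) (0 + r), Finset.mul_sum]
  exact Finset.sum_congr rfl fun j _ => hP.measure_restart_pi_stateSet i l hC hCm hA r j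

theorem map_restart_restrict (hP : IsMarkovRandomWalk p μ P) (i l : J) {m : ℕ}
    {C : Set (ℕ → J × ℝ)} (hC : MeasurableSet C) (hCm : DependsOn (· ∈ C) (Iic m)) :
    ((P i).restrict (C ∩ stateSet m l)).map (restart m) = P i (C ∩ stateSet m l) • P l := by
  have := hP.isProbabilityMeasure i
  refine ext_of_generate_finite _ generateFrom_squareCylinders.symm
    (isPiSystem_squareCylinders (fun _ => MeasurableSpace.isPiSystem_measurableSet)
      fun _ => by simp) ?_ ?_
  · rintro _ ⟨s, t, ht, rfl⟩
    classical
    replace ht : ∀ n, MeasurableSet (t n) := fun n => by simpa using ht n (mem_univ n)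
    have ht' : ∀ n, MeasurableSet (s.piecewise t (fun _ => univ) n) := fun n => by
      by_cases hn : n ∈ s <;> simp [hn, ht n]
    have hbox : (s : Set ℕ).pi t = (Iic (s.sup id)).pi (s.piecewise t fun _ => univ) := by
      ext η
      simp only [mem_pi, Finset.mem_coe, mem_Iic]
      refine ⟨fun h n _ => ?_, fun h n hn => ?_⟩
      · by_cases hn : n ∈ s <;> simp [hn, h]
      · simpa [hn] using h n (Finset.le_sup (f := id) hn)
    have hpi := MeasurableSet.pi (to_countable (Iic (s.sup id))) fun n _ => ht' n
    rw [hbox, Measure.map_apply (measurable_restart m) hpi,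
      Measure.restrict_apply (measurable_restart m hpi), inter_comm, Measure.smul_apply,
      smul_eq_mul]
    exact hP.measure_restart_pi i l hC hCm ht' _
  · have := hP.isProbabilityMeasure l
    simp [Measure.map_apply (measurable_restart m) MeasurableSet.univ]

theorem lintegral_stateSet_mul_restart (hP : IsMarkovRandomWalk p μ P) (i l : J) {m : ℕ}
    {f g : (ℕ → J × ℝ) → ℝ≥0∞} (hf : Measurable f) (hfm : DependsOn f (Iic m))
    (hg : Measurable g) :
    ∫⁻ ω in stateSet m l, f ω * g (restart m ω) ∂P i
      = (∫⁻ ω in stateSet m l, f ω ∂P i) * ∫⁻ ω, g ω ∂P l := by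
  have := hP.isProbabilityMeasure i
  have := hP.isProbabilityMeasure l
  set Q := (P i).restrict (stateSet m l)
  have hf_stopped : ∀ ω, f (stopped m ω) = f ω := fun ω => hfm fun n hn => stopped_apply_of_le ω hn
  have hpair : Measurable fun ω : ℕ → J × ℝ => (stopped m ω, restart m ω) :=
    (measurable_stopped m).prodMk (measurable_restart m)
  have hjoint : Q.map (fun ω => (stopped m ω, restart m ω)) = (Q.map (stopped m)).prod (P l) := by
    refine (Measure.prod_eq fun A S hA hS => ?_).symm
    have hAm : DependsOn (· ∈ stopped m ⁻¹' A) (Iic m) := fun ω ω' h => by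
      simp only [mem_preimage, dependsOn_stopped m h]
    have hA' : MeasurableSet (stopped m ⁻¹' A) := measurable_stopped m hA
    have key := congrArg (· S) (hP.map_restart_restrict i l hA' hAm)
    simp only [Measure.map_apply (measurable_restart m) hS, Measure.restrict_apply
      (measurable_restart m hS), Measure.smul_apply, smul_eq_mul] at key
    rw [Measure.map_apply hpair (hA.prod hS), Measure.map_apply (measurable_stopped m) hA,
      Measure.restrict_apply hA', Measure.restrict_apply (hpair (hA.prod hS)), ← key,
      mk_preimage_prod, inter_comm (stopped m ⁻¹' A), inter_assoc]
  calc ∫⁻ ω in stateSet m l, f ω * g (restart m ω) ∂P i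
      = ∫⁻ z : (ℕ → J × ℝ) × (ℕ → J × ℝ), f z.1 * g z.2
          ∂(Q.map fun ω => (stopped m ω, restart m ω)) := by
        rw [lintegral_map (by fun_prop) hpair]
        simp only [hf_stopped, Q]
    _ = (∫⁻ x, f x ∂Q.map (stopped m)) * ∫⁻ ω, g ω ∂P l := by
        rw [hjoint, lintegral_prod_mul hf.aemeasurable hg.aemeasurable]
    _ = (∫⁻ ω in stateSet m l, f ω ∂P i) * ∫⁻ ω, g ω ∂P l := by
        rw [lintegral_map hf (measurable_stopped m)]
        simp only [hf_stopped, Q]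

end IsMarkovRandomWalk

end Markov

section LadderMoments

variable {J : Type*} [MeasurableSpace J]

lemma measurable_ladderWeight (θ : ℝ) (k n : ℕ) : Measurable (ladderWeight (J := J) θ k n) :=
  (Real.measurable_exp.comp (measurable_const.mul (measurable_Tsum n))).ennreal_ofReal.indicator
    (measurableSet_setOfPred.2 (measurable_ladder_eq k n))

/-- The `j`-th entry of the row vector `E_Q[exp(θ T_{β(k)}); J_{β(k)} = ·, β(k) < ∞]`; for
`Q = P i` and `k = 1` this is the entry `(L_θ)_{i,j}` of the ladder matrix. -/
noncomputable def ladderMoment (Q : Measure (ℕ → J × ℝ)) (θ : ℝ) (k : ℕ) (j : J) : ℝ≥0∞ :=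
  ∑' n : ℕ, ∫⁻ ω in {ω | ladder ω k = (n : ℕ∞) ∧ (ω n).1 = j},
    ENNReal.ofReal (Real.exp (θ * Tsum ω n)) ∂Q

variable [MeasurableSingletonClass J]

lemma ladderMoment_eq_tsum_setLIntegral (Q : Measure (ℕ → J × ℝ)) (θ : ℝ) (k : ℕ) (j : J) :
    ladderMoment Q θ k j = ∑' n, ∫⁻ ω in stateSet n j, ladderWeight θ k n ω ∂Q := by
  refine tsum_congr fun n => ?_
  rw [ladderWeight, ← lintegral_indicator (measurableSet_stateSet n j), indicator_indicator,
    lintegral_indicator ((measurableSet_stateSet n j).inter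
      (measurableSet_setOfPred.2 (measurable_ladder_eq k n)))]
  congr 2
  ext ω
  exact and_comm

lemma ladderMoment_eq_lintegral_tsum (Q : Measure (ℕ → J × ℝ)) (θ : ℝ) (k : ℕ) (j : J) :
    ladderMoment Q θ k j
      = ∫⁻ ω, ∑' n, (stateSet n j).indicator (ladderWeight θ k n) ω ∂Q := by
  rw [ladderMoment_eq_tsum_setLIntegral, lintegral_tsum fun n =>
    ((measurable_ladderWeight θ k n).indicator (measurableSet_stateSet n j)).aemeasurable]
  exact tsum_congr fun n => (lintegral_indicator (measurableSet_stateSet n j) _).symm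

lemma ladderMoment_finset_sum_smul {ι : Type*} (s : Finset ι) (γ : ι → ℝ≥0∞)
    (Q : ι → Measure (ℕ → J × ℝ)) (θ : ℝ) (k : ℕ) (j : J) :
    ladderMoment (∑ i ∈ s, γ i • Q i) θ k j = ∑ i ∈ s, γ i * ladderMoment (Q i) θ k j := by
  simp_rw [ladderMoment_eq_lintegral_tsum, lintegral_finsetSum_measure, lintegral_smul_measure,
    smul_eq_mul]

variable [Fintype J]

lemma setLIntegral_eq_sum_stateSet (Q : Measure (ℕ → J × ℝ)) {E : Set (ℕ → J × ℝ)}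
    (hE : MeasurableSet E) (f : (ℕ → J × ℝ) → ℝ≥0∞) (n : ℕ) :
    ∫⁻ ω in E, f ω ∂Q = ∑ j, ∫⁻ ω in E ∩ stateSet n j, f ω ∂Q := by
  rw [← lintegral_biUnion_finset (fun j _ j' _ hne => Set.disjoint_left.2 fun ω h h' =>
      hne (h.2.symm.trans h'.2)) fun j _ => hE.inter (measurableSet_stateSet n j)]
  congr 2
  ext ω
  simp [stateSet]

lemma tsum_setLIntegral_ladder (Q : Measure (ℕ → J × ℝ)) (θ : ℝ) (k : ℕ) :
    ∑' n : ℕ, ∫⁻ ω in {ω | ladder ω k = (n : ℕ∞)}, ENNReal.ofReal (Real.exp (θ * Tsum ω n)) ∂Q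
      = ∑ j, ladderMoment Q θ k j := by
  unfold ladderMoment
  rw [← Summable.tsum_finsetSum fun _ _ => ENNReal.summable]
  exact tsum_congr fun n =>
    setLIntegral_eq_sum_stateSet Q (measurableSet_setOfPred.2 (measurable_ladder_eq k n)) _ n

theorem IsMarkovRandomWalk.ladderMoment_succ {p : J → J → ℝ≥0∞} {μ : J → J → Measure ℝ}
    {P : J → Measure (ℕ → J × ℝ)} (hP : IsMarkovRandomWalk p μ P) (θ : ℝ) (k : ℕ) (i j : J) :
    ladderMoment (P i) θ (k + 1) j = ∑ l, ladderMoment (P i) θ k l * ladderMoment (P l) θ 1 j := by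
  set g : (ℕ → J × ℝ) → ℝ≥0∞ := fun η => ∑' r, (stateSet r j).indicator (ladderWeight θ 1 r) η
  have hg : Measurable g := Measurable.tsum fun r =>
    (measurable_ladderWeight θ 1 r).indicator (measurableSet_stateSet r j)
  calc ladderMoment (P i) θ (k + 1) j
      = ∫⁻ ω, ∑' m, ladderWeight θ k m ω * g (restart m ω) ∂P i := by
        rw [ladderMoment_eq_lintegral_tsum]
        exact lintegral_congr fun ω => tsum_ladderWeight_succ θ k j ω
    _ = ∑' m, ∑ l, ∫⁻ ω in stateSet m l, ladderWeight θ k m ω * g (restart m ω) ∂P i := by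
        rw [lintegral_tsum (f := fun m ω => ladderWeight θ k m ω * g (restart m ω)) fun m =>
          ((measurable_ladderWeight θ k m).mul (hg.comp (measurable_restart m))).aemeasurable]
        refine tsum_congr fun m => ?_
        simpa using setLIntegral_eq_sum_stateSet (P i) MeasurableSet.univ _ m
    _ = ∑' m, ∑ l,
          (∫⁻ ω in stateSet m l, ladderWeight θ k m ω ∂P i) * ladderMoment (P l) θ 1 j := by
        refine tsum_congr fun m => Finset.sum_congr rfl fun l _ => ?_
        rw [hP.lintegral_stateSet_mul_restart i l (measurable_ladderWeight θ k m)
          (dependsOn_ladderWeight θ k m) hg, ladderMoment_eq_lintegral_tsum]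
    _ = ∑ l, ladderMoment (P i) θ k l * ladderMoment (P l) θ 1 j := by
        rw [Summable.tsum_finsetSum fun _ _ => ENNReal.summable]
        simp_rw [ENNReal.tsum_mul_right, ladderMoment_eq_tsum_setLIntegral]

end LadderMoments

theorem stmt_8_general
    {J : Type*} [Fintype J] [DecidableEq J]
    [MeasurableSpace J] [MeasurableSingletonClass J]
    (p : J → J → ℝ≥0∞)
    (μ : J → J → Measure ℝ)
    (P : J → Measure (ℕ → J × ℝ)) (hPprob : ∀ i, IsProbabilityMeasure (P i))
    -- the chain starts at `(i, 0)`
    (hinit : ∀ i, P i {ω | ω 0 = (i, 0)} = 1)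
    -- Markov property: conditionally on `J_n = j`, the next pair `(J_{n+1} , Y_{n+1})`
    -- has law `Σ_k p_{j,k} (δ_k ⊗ μ_{j,k})`, independently of the past
    (hstep : ∀ i : J, ∀ n : ℕ, ∀ C : Set (ℕ → J × ℝ),
      MeasurableSet C →
      (∀ ω ω' : ℕ → J × ℝ, (∀ m ≤ n, ω m = ω' m) → (ω ∈ C ↔ ω' ∈ C)) →
      ∀ k : J, ∀ B : Set ℝ, MeasurableSet B →
        P i (C ∩ {ω | (ω (n + 1)).1 = k ∧ (ω (n + 1)).2 ∈ B})
          = ∑ j, p j k * μ j k B * P i (C ∩ {ω | (ω n).1 = j}))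
    (θ : ℝ)
    -- the ladder matrix `L_θ`
    (Lθ : Matrix J J ℝ≥0∞)
    (hL : ∀ i j, Lθ i j = ∑' n : ℕ,
      ∫⁻ ω in {ω | ladder ω 1 = (n : ℕ∞) ∧ (ω n).1 = j},
        ENNReal.ofReal (Real.exp (θ * Tsum ω n)) ∂(P i)) :
    ∀ k : ℕ, 1 ≤ k → ∀ γ : J → ℝ≥0∞, (∑ i, γ i = 1) →
      (∀ j : J,
        (∑' n : ℕ, ∫⁻ ω in {ω | ladder ω k = (n : ℕ∞) ∧ (ω n).1 = j},
            ENNReal.ofReal (Real.exp (θ * Tsum ω n)) ∂(∑ i, γ i • P i))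
          = Matrix.vecMul γ (Lθ ^ k) j) ∧
      (∑' n : ℕ, ∫⁻ ω in {ω | ladder ω k = (n : ℕ∞)},
          ENNReal.ofReal (Real.exp (θ * Tsum ω n)) ∂(∑ i, γ i • P i))
        = dotProduct γ ((Lθ ^ k).mulVec fun _ => 1) := by
  intro k hk γ _
  obtain ⟨k, rfl⟩ := Nat.exists_eq_add_of_le' hk
  have hP : IsMarkovRandomWalk p μ P :=
    ⟨hPprob, hinit, fun i n C hC hCn => hstep i n C hC fun _ _ h => (hCn h).to_iff⟩
  have hL₁ : ∀ i j, ladderMoment (P i) θ 1 j = Lθ i j := fun i j => (hL i j).symm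
  have hpow : ∀ n i j, ladderMoment (P i) θ (n + 1) j = (Lθ ^ (n + 1)) i j := by
    intro n
    induction n with
    | zero => simpa using hL₁
    | succ n ih =>
      intro i j
      rw [hP.ladderMoment_succ, pow_succ, Matrix.mul_apply]
      simp only [ih, hL₁]
  have hrow : ∀ j, ladderMoment (∑ i, γ i • P i) θ (k + 1) j = Matrix.vecMul γ (Lθ ^ (k + 1)) j :=
    fun j => by simp [ladderMoment_finset_sum_smul, Matrix.vecMul, dotProduct, hpow]
  refine ⟨hrow, ?_⟩
  rw [tsum_setLIntegral_ladder, Matrix.dotProduct_mulVec]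
  simp [hrow, dotProduct]

/-- Markov renewal identity for ladder variates (equation (2.1)):
`E_γ[exp(θ T_{β(k)}); J_{β(k)} = j, β(k) < ∞] = (γ L_θᵏ)_j`, and consequently
`E_γ[exp(θ T_{β(k)}); β(k) < ∞] = γ L_θᵏ 1ᵗ`. -/
theorem stmt_8
    {J : Type*} [Fintype J] [DecidableEq J] [Nonempty J]
    [MeasurableSpace J] [MeasurableSingletonClass J]
    (p : J → J → ℝ≥0∞) (hp : ∀ i, ∑ j, p i j = 1)
    (μ : J → J → Measure ℝ) (hμ : ∀ i j, IsProbabilityMeasure (μ i j))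
    (P : J → Measure (ℕ → J × ℝ)) (hPprob : ∀ i, IsProbabilityMeasure (P i))
    -- the chain starts at `(i, 0)`
    (hinit : ∀ i, P i {ω | ω 0 = (i, 0)} = 1)
    -- Markov property: conditionally on `J_n = j`, the next pair `(J_{n+1} , Y_{n+1})`
    -- has law `Σ_k p_{j,k} (δ_k ⊗ μ_{j,k})`, independently of the past
    (hstep : ∀ i : J, ∀ n : ℕ, ∀ C : Set (ℕ → J × ℝ),
      MeasurableSet C →
      (∀ ω ω' : ℕ → J × ℝ, (∀ m ≤ n, ω m = ω' m) → (ω ∈ C ↔ ω' ∈ C)) →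
      ∀ k : J, ∀ B : Set ℝ, MeasurableSet B →
        P i (C ∩ {ω | (ω (n + 1)).1 = k ∧ (ω (n + 1)).2 ∈ B})
          = ∑ j, p j k * μ j k B * P i (C ∩ {ω | (ω n).1 = j}))
    (θ : ℝ)
    -- the ladder matrix `L_θ`
    (Lθ : Matrix J J ℝ≥0∞)
    (hL : ∀ i j, Lθ i j = ∑' n : ℕ,
      ∫⁻ ω in {ω | ladder ω 1 = (n : ℕ∞) ∧ (ω n).1 = j},
        ENNReal.ofReal (Real.exp (θ * Tsum ω n)) ∂(P i)) :
    ∀ k : ℕ, 1 ≤ k → ∀ γ : J → ℝ≥0∞, (∑ i, γ i = 1) →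
      (∀ j : J,
        (∑' n : ℕ, ∫⁻ ω in {ω | ladder ω k = (n : ℕ∞) ∧ (ω n).1 = j},
            ENNReal.ofReal (Real.exp (θ * Tsum ω n)) ∂(∑ i, γ i • P i))
          = Matrix.vecMul γ (Lθ ^ k) j) ∧
      (∑' n : ℕ, ∫⁻ ω in {ω | ladder ω k = (n : ℕ∞)},
          ENNReal.ofReal (Real.exp (θ * Tsum ω n)) ∂(∑ i, γ i • P i))
        = dotProduct γ ((Lθ ^ k).mulVec fun _ => 1) :=
  stmt_8_general p μ P hPprob hinit hstep θ Lθ hL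
end

section
/- (Fiber decomposition, equation (2.7).) Fix an integer N ≥ 1 and prefixes a ∈ 𝔏^N, b ∈ 𝔏^N. For i, j with min(i,j) ≤ N ≤ max(i,j) (or i = j = N) and T ∈ {S,I,D}, let E^T_{i,j} ⊆ 𝔈^ℕ be the event that some finite prefix of the infinite edit word consumes exactly i A-letters and j B-letters, has last symbol of type T, and its consumed A-letters agree with a in the first min(i,N) positions and its consumed B-letters agree with b in the first min(j,N) positions; set Q^T_{i,j} := Q(E^T_{i,j}). Assume that Q-almost surely both consumption counts of the infinite edit word tend to infinity. Then Q{ω : the sequence of consumed A-letters of ω begins with a and the sequence of consumed B-letters of ω begins with b} = − Q^S_{N,N} + Σ_{j=N}^{∞} ( Q^S_{N,j} + Q^D_{N,j} ) + Σ_{i=N}^{∞} ( Q^S_{i,N} + Q^I_{i,N} ). -/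
open MeasureTheory ENNReal

/-- The three types of edit symbols: substitution, insertion, deletion. -/
inductive EType : Type
  | S : EType
  | I : EType
  | D : EType

/-- An edit symbol over an alphabet `L`: a substitution `(a,b)`, an insertion
`(Δ,b)`, or a deletion `(a,Δ)`. -/
inductive ESym (L : Type*) : Type _
  | sub (a b : L) : ESym L
  | ins (b : L) : ESym L
  | del (a : L) : ESym L

instance {L : Type*} : MeasurableSpace (ESym L) := ⊤

/-- The type of an edit symbol. -/
def ESym.etype {L : Type*} : ESym L → EType
  | .sub _ _ => .S
  | .ins _ => .I
  | .del _ => .D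

/-- The emission weight of an edit symbol. -/
def emit {L : Type*} (q : L → L → ℝ) (p' p : L → ℝ) : ESym L → ℝ
  | .sub a b => q a b
  | .ins b => p' b
  | .del a => p a

/-- The weight of an edit word, given the type of the preceding symbol
(`S` by convention for the first symbol). -/
def wordWeight {L : Type*} (t : EType → EType → ℝ) (q : L → L → ℝ) (p' p : L → ℝ) :
    EType → List (ESym L) → ℝ
  | _, [] => 1
  | prev, e :: rest => t prev e.etype * emit q p' p e * wordWeight t q p' p e.etype rest

/-- The `A`-letters consumed by an edit word, in order. -/
def consumedA {L : Type*} : List (ESym L) → List L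
  | [] => []
  | .sub a _ :: rest => a :: consumedA rest
  | .ins _ :: rest => consumedA rest
  | .del a :: rest => a :: consumedA rest

/-- The `B`-letters consumed by an edit word, in order. -/
def consumedB {L : Type*} : List (ESym L) → List L
  | [] => []
  | .sub _ b :: rest => b :: consumedB rest
  | .ins b :: rest => b :: consumedB rest
  | .del _ :: rest => consumedB rest

/-- The type of the last symbol of an edit word (`S` for the empty word, by convention). -/
def lastType {L : Type*} : List (ESym L) → EType
  | [] => .S
  | [e] => e.etype
  | _ :: rest => lastType rest

/-- The prefix of length `n` of an infinite edit word. -/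
def pref {L : Type*} (ω : ℕ → ESym L) (n : ℕ) : List (ESym L) :=
  List.ofFn fun m : Fin n => ω m

/-!
The two consumption counts trace a lattice path with steps `(1,1)`, `(0,1)`, `(1,0)`, so the
`A`-count first reaches `N` exactly at a step of type `S` or `D` that lands on `N`; this pins down
the unique prefix witnessing `E^S_{N,j}` or `E^D_{N,j}`, and makes these events disjoint as `j`
and the type vary. Their union is the event that the path reaches the row `i = N` with the
prescribed letters, and symmetrically for the column `j = N` with the types `S`, `I`. The prefix
event is the union of the row and column events, and both happen exactly when the path enters
the quadrant at the corner `(N, N)` by a substitution, i.e. on `E^S_{N,N}`; inclusion–exclusion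
gives the identity.
-/

theorem isLeast_setOf_le_succ_iff {f : ℕ → ℕ} (hf : Monotone f) (hstep : ∀ k, f (k + 1) ≤ f k + 1)
    {N k : ℕ} : IsLeast {m | N ≤ f m} (k + 1) ↔ f (k + 1) = N ∧ f k < f (k + 1) := by
  constructor
  · rintro ⟨hreach, hfirst⟩
    have hreach : N ≤ f (k + 1) := hreach
    have hk : f k < N := not_le.mp fun h => by simpa using hfirst h
    have := hstep k
    omega
  · rintro ⟨hreach, hup⟩
    refine ⟨hreach.ge, fun m hm => ?_⟩
    have hm : N ≤ f m := hm
    by_contra! hlt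
    have := hf (Nat.le_of_lt_succ hlt)
    omega

lemma List.IsPrefix.take_eq_of_le_length {α : Type*} {l₁ l₂ : List α} (h : l₁ <+: l₂) {k : ℕ}
    (hk : k ≤ l₁.length) : l₂.take k = l₁.take k := by
  obtain ⟨t, rfl⟩ := h
  exact List.take_append_of_le_length hk

lemma EType.eq_S_of_ne {T : EType} (hI : T ≠ .I) (hD : T ≠ .D) : T = .S := by
  cases T <;> simp_all

lemma EType.ne_I_iff {T : EType} : T ≠ .I ↔ T = .S ∨ T = .D := by
  cases T <;> simp

lemma EType.ne_D_iff {T : EType} : T ≠ .D ↔ T = .S ∨ T = .I := by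
  cases T <;> simp

namespace EditWord

variable {L : Type*}

lemma consumedA_append (l₁ l₂ : List (ESym L)) :
    consumedA (l₁ ++ l₂) = consumedA l₁ ++ consumedA l₂ := by
  induction l₁ with
  | nil => rfl
  | cons e l ih => cases e <;> simp [consumedA, ih]

lemma consumedB_append (l₁ l₂ : List (ESym L)) :
    consumedB (l₁ ++ l₂) = consumedB l₁ ++ consumedB l₂ := by
  induction l₁ with
  | nil => rfl
  | cons e l ih => cases e <;> simp [consumedB, ih]

lemma lastType_append_singleton (l : List (ESym L)) (e : ESym L) :
    lastType (l ++ [e]) = e.etype := by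
  induction l with
  | nil => rfl
  | cons x l ih => cases l with
    | nil => rfl
    | cons y l' => exact ih

lemma pref_succ (ω : ℕ → ESym L) (n : ℕ) : pref ω (n + 1) = pref ω n ++ [ω n] := by
  rw [pref, List.ofFn_succ', List.concat_eq_append]
  rfl

lemma pref_prefix (ω : ℕ → ESym L) {m n : ℕ} (h : m ≤ n) : pref ω m <+: pref ω n := by
  induction n, h using Nat.le_induction with
  | base => exact List.prefix_refl _
  | succ n _ ih => rw [pref_succ]; exact ih.trans (List.prefix_append _ _)

lemma consumedA_prefix {l₁ l₂ : List (ESym L)} (h : l₁ <+: l₂) :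
    consumedA l₁ <+: consumedA l₂ := by
  obtain ⟨t, rfl⟩ := h
  rw [consumedA_append]
  exact List.prefix_append _ _

lemma consumedB_prefix {l₁ l₂ : List (ESym L)} (h : l₁ <+: l₂) :
    consumedB l₁ <+: consumedB l₂ := by
  obtain ⟨t, rfl⟩ := h
  rw [consumedB_append]
  exact List.prefix_append _ _

def lenA (ω : ℕ → ESym L) (n : ℕ) : ℕ := (consumedA (pref ω n)).length

def lenB (ω : ℕ → ESym L) (n : ℕ) : ℕ := (consumedB (pref ω n)).length

lemma lenA_mono (ω : ℕ → ESym L) : Monotone (lenA ω) :=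
  fun _ _ h => (consumedA_prefix (pref_prefix ω h)).length_le

lemma lenB_mono (ω : ℕ → ESym L) : Monotone (lenB ω) :=
  fun _ _ h => (consumedB_prefix (pref_prefix ω h)).length_le

lemma lenA_succ_le (ω : ℕ → ESym L) (n : ℕ) : lenA ω (n + 1) ≤ lenA ω n + 1 := by
  rw [lenA, lenA, pref_succ, consumedA_append]
  cases ω n <;> simp [consumedA]

lemma lenB_succ_le (ω : ℕ → ESym L) (n : ℕ) : lenB ω (n + 1) ≤ lenB ω n + 1 := by
  rw [lenB, lenB, pref_succ, consumedB_append]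
  cases ω n <;> simp [consumedB]

lemma lenA_lt_succ_iff (ω : ℕ → ESym L) (n : ℕ) :
    lenA ω n < lenA ω (n + 1) ↔ (ω n).etype ≠ .I := by
  rw [lenA, lenA, pref_succ, consumedA_append]
  cases ω n <;> simp [consumedA, ESym.etype]

lemma lenB_lt_succ_iff (ω : ℕ → ESym L) (n : ℕ) :
    lenB ω n < lenB ω (n + 1) ↔ (ω n).etype ≠ .D := by
  rw [lenB, lenB, pref_succ, consumedB_append]
  cases ω n <;> simp [consumedB, ESym.etype]

theorem isLeast_lenA_iff {ω : ℕ → ESym L} {N n : ℕ} (hN : 1 ≤ N) :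
    IsLeast {m | N ≤ lenA ω m} n ↔ lenA ω n = N ∧ lastType (pref ω n) ≠ .I := by
  cases n with
  | zero =>
    have h0 : lenA ω 0 = 0 := rfl
    exact iff_of_false (fun h => by have : N ≤ lenA ω 0 := h.1; omega) (by omega)
  | succ k =>
    rw [isLeast_setOf_le_succ_iff (lenA_mono ω) (lenA_succ_le ω), lenA_lt_succ_iff, pref_succ,
      lastType_append_singleton]

theorem isLeast_lenB_iff {ω : ℕ → ESym L} {N n : ℕ} (hN : 1 ≤ N) :
    IsLeast {m | N ≤ lenB ω m} n ↔ lenB ω n = N ∧ lastType (pref ω n) ≠ .D := by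
  cases n with
  | zero =>
    have h0 : lenB ω 0 = 0 := rfl
    exact iff_of_false (fun h => by have : N ≤ lenB ω 0 := h.1; omega) (by omega)
  | succ k =>
    rw [isLeast_setOf_le_succ_iff (lenB_mono ω) (lenB_succ_le ω), lenB_lt_succ_iff, pref_succ,
      lastType_append_singleton]

def AgreesWith (l : List L) (a : ℕ → L) (k : ℕ) : Prop :=
  l.take k = (List.range k).map fun m => a (m + 1)

section Events

variable (N : ℕ) (a b : ℕ → L)

/-- The event `E^T_{i,j}`. -/
def fiberEvent (T : EType) (i j : ℕ) : Set (ℕ → ESym L) :=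
  {ω | ∃ n, lenA ω n = i ∧ lenB ω n = j ∧ lastType (pref ω n) = T ∧
    AgreesWith (consumedA (pref ω n)) a (min i N) ∧ AgreesWith (consumedB (pref ω n)) b (min j N)}

def prefixEvent : Set (ℕ → ESym L) :=
  {ω | ∃ n, N ≤ lenA ω n ∧ N ≤ lenB ω n ∧
    AgreesWith (consumedA (pref ω n)) a N ∧ AgreesWith (consumedB (pref ω n)) b N}

def rowEvent : Set (ℕ → ESym L) :=
  ⋃ j, fiberEvent N a b .S N (N + j) ∪ fiberEvent N a b .D N (N + j)

def columnEvent : Set (ℕ → ESym L) :=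
  ⋃ i, fiberEvent N a b .S (N + i) N ∪ fiberEvent N a b .I (N + i) N

end Events

variable {N : ℕ} {a b : ℕ → L}

lemma mem_fiberEvent_S_union_D_iff (hN : 1 ≤ N) {ω : ℕ → ESym L} {j : ℕ} :
    ω ∈ fiberEvent N a b .S N (N + j) ∪ fiberEvent N a b .D N (N + j) ↔
      ∃ n, IsLeast {m | N ≤ lenA ω m} n ∧ lenB ω n = N + j ∧
        AgreesWith (consumedA (pref ω n)) a N ∧ AgreesWith (consumedB (pref ω n)) b N := by
  simp only [fiberEvent, isLeast_lenA_iff hN, EType.ne_I_iff, min_self,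
    min_eq_right (Nat.le_add_right N j), Set.mem_union, Set.mem_ofPred_eq]
  grind

lemma mem_fiberEvent_S_union_I_iff (hN : 1 ≤ N) {ω : ℕ → ESym L} {i : ℕ} :
    ω ∈ fiberEvent N a b .S (N + i) N ∪ fiberEvent N a b .I (N + i) N ↔
      ∃ n, IsLeast {m | N ≤ lenB ω m} n ∧ lenA ω n = N + i ∧
        AgreesWith (consumedA (pref ω n)) a N ∧ AgreesWith (consumedB (pref ω n)) b N := by
  simp only [fiberEvent, isLeast_lenB_iff hN, EType.ne_D_iff, min_self,
    min_eq_right (Nat.le_add_right N i), Set.mem_union, Set.mem_ofPred_eq]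
  grind

lemma mem_rowEvent_iff (hN : 1 ≤ N) {ω : ℕ → ESym L} :
    ω ∈ rowEvent N a b ↔
      ∃ n, IsLeast {m | N ≤ lenA ω m} n ∧ N ≤ lenB ω n ∧
        AgreesWith (consumedA (pref ω n)) a N ∧ AgreesWith (consumedB (pref ω n)) b N := by
  simp only [rowEvent, Set.mem_iUnion, mem_fiberEvent_S_union_D_iff hN]
  constructor
  · rintro ⟨j, n, hn, hB, hagree⟩
    exact ⟨n, hn, hB ▸ Nat.le_add_right N j, hagree⟩
  · rintro ⟨n, hn, hB, hagree⟩
    exact ⟨lenB ω n - N, n, hn, by omega, hagree⟩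

lemma mem_columnEvent_iff (hN : 1 ≤ N) {ω : ℕ → ESym L} :
    ω ∈ columnEvent N a b ↔
      ∃ n, IsLeast {m | N ≤ lenB ω m} n ∧ N ≤ lenA ω n ∧
        AgreesWith (consumedA (pref ω n)) a N ∧ AgreesWith (consumedB (pref ω n)) b N := by
  simp only [columnEvent, Set.mem_iUnion, mem_fiberEvent_S_union_I_iff hN]
  constructor
  · rintro ⟨i, n, hn, hA, hagree⟩
    exact ⟨n, hn, hA ▸ Nat.le_add_right N i, hagree⟩
  · rintro ⟨n, hn, hA, hagree⟩
    exact ⟨lenA ω n - N, n, hn, by omega, hagree⟩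

lemma agreesWith_consumedA_of_le {ω : ℕ → ESym L} {m n : ℕ} (hmn : m ≤ n) (hm : N ≤ lenA ω m)
    (h : AgreesWith (consumedA (pref ω n)) a N) : AgreesWith (consumedA (pref ω m)) a N := by
  rwa [AgreesWith, ← (consumedA_prefix (pref_prefix ω hmn)).take_eq_of_le_length hm]

lemma agreesWith_consumedB_of_le {ω : ℕ → ESym L} {m n : ℕ} (hmn : m ≤ n) (hm : N ≤ lenB ω m)
    (h : AgreesWith (consumedB (pref ω n)) b N) : AgreesWith (consumedB (pref ω m)) b N := by
  rwa [AgreesWith, ← (consumedB_prefix (pref_prefix ω hmn)).take_eq_of_le_length hm]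

/-- Stopping the path when it first reaches the row `i = N` or the column `j = N`, whichever
comes last, shows that the prefix event is the union of the row and column events. -/
theorem prefixEvent_eq_rowEvent_union_columnEvent (hN : 1 ≤ N) :
    prefixEvent N a b = rowEvent N a b ∪ columnEvent N a b := by
  ext ω
  rw [Set.mem_union, mem_rowEvent_iff hN, mem_columnEvent_iff hN]
  constructor
  · rintro ⟨n, hA, hB, hagreeA, hagreeB⟩
    obtain ⟨hτA, hτA_first⟩ := isLeast_csInf (s := {m | N ≤ lenA ω m}) ⟨n, hA⟩
    obtain ⟨hτB, hτB_first⟩ := isLeast_csInf (s := {m | N ≤ lenB ω m}) ⟨n, hB⟩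
    set τA := sInf {m | N ≤ lenA ω m}
    set τB := sInf {m | N ≤ lenB ω m}
    rcases le_total τB τA with hBA | hAB
    · have hBτA : N ≤ lenB ω τA := le_trans hτB (lenB_mono ω hBA)
      exact .inl ⟨τA, ⟨hτA, hτA_first⟩, hBτA, agreesWith_consumedA_of_le (hτA_first hA) hτA hagreeA,
        agreesWith_consumedB_of_le (hτA_first hA) hBτA hagreeB⟩
    · have hAτB : N ≤ lenA ω τB := le_trans hτA (lenA_mono ω hAB)
      exact .inr ⟨τB, ⟨hτB, hτB_first⟩, hAτB, agreesWith_consumedA_of_le (hτB_first hB) hAτB hagreeA,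
        agreesWith_consumedB_of_le (hτB_first hB) hτB hagreeB⟩
  · rintro (⟨n, hn, hB, hagree⟩ | ⟨n, hn, hA, hagree⟩)
    · exact ⟨n, hn.1, hB, hagree⟩
    · exact ⟨n, hA, hn.1, hagree⟩

theorem rowEvent_inter_columnEvent (hN : 1 ≤ N) :
    rowEvent N a b ∩ columnEvent N a b = fiberEvent N a b .S N N := by
  ext ω
  rw [Set.mem_inter_iff, mem_rowEvent_iff hN, mem_columnEvent_iff hN]
  constructor
  · rintro ⟨⟨n, hn, hB, hagreeA, hagreeB⟩, ⟨m, hm, hA, -⟩⟩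
    obtain rfl : n = m := le_antisymm (hn.2 hA) (hm.2 hB)
    obtain ⟨hnA, hnI⟩ := (isLeast_lenA_iff hN).mp hn
    obtain ⟨hnB, hnD⟩ := (isLeast_lenB_iff hN).mp hm
    exact ⟨n, hnA, hnB, EType.eq_S_of_ne hnI hnD, by rwa [min_self], by rwa [min_self]⟩
  · rintro ⟨n, hnA, hnB, hS, hagreeA, hagreeB⟩
    rw [min_self] at hagreeA hagreeB
    refine ⟨⟨n, (isLeast_lenA_iff hN).mpr ⟨hnA, ?_⟩, hnB.ge, hagreeA, hagreeB⟩,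
      ⟨n, (isLeast_lenB_iff hN).mpr ⟨hnB, ?_⟩, hnA.ge, hagreeA, hagreeB⟩⟩ <;> simp [hS]

lemma eq_of_mem_fiberEvent_row (hN : 1 ≤ N) {ω : ℕ → ESym L} {T T' : EType} {j j' : ℕ}
    (hT : T ≠ .I) (hT' : T' ≠ .I) (h : ω ∈ fiberEvent N a b T N j)
    (h' : ω ∈ fiberEvent N a b T' N j') : T = T' ∧ j = j' := by
  obtain ⟨n, hA, rfl, rfl, -⟩ := h
  obtain ⟨n', hA', rfl, rfl, -⟩ := h'
  obtain rfl : n = n' :=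
    ((isLeast_lenA_iff hN).mpr ⟨hA, hT⟩).unique ((isLeast_lenA_iff hN).mpr ⟨hA', hT'⟩)
  exact ⟨rfl, rfl⟩

lemma eq_of_mem_fiberEvent_column (hN : 1 ≤ N) {ω : ℕ → ESym L} {T T' : EType} {i i' : ℕ}
    (hT : T ≠ .D) (hT' : T' ≠ .D) (h : ω ∈ fiberEvent N a b T i N)
    (h' : ω ∈ fiberEvent N a b T' i' N) : T = T' ∧ i = i' := by
  obtain ⟨n, rfl, hB, rfl, -⟩ := h
  obtain ⟨n', rfl, hB', rfl, -⟩ := h'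
  obtain rfl : n = n' :=
    ((isLeast_lenB_iff hN).mpr ⟨hB, hT⟩).unique ((isLeast_lenB_iff hN).mpr ⟨hB', hT'⟩)
  exact ⟨rfl, rfl⟩

instance [Countable L] : Countable (ESym L) := by
  let encode : ESym L → (L × L) ⊕ L ⊕ L
    | .sub a b => .inl (a, b)
    | .ins b => .inr (.inl b)
    | .del a => .inr (.inr a)
  refine Function.Injective.countable (f := encode) ?_
  rintro (_ | _ | _) (_ | _ | _) h <;> simp_all [encode]

lemma measurableSet_exists_pref [Countable L] (P : ℕ → List (ESym L) → Prop) :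
    MeasurableSet {ω : ℕ → ESym L | ∃ n, P n (pref ω n)} := by
  simp only [Set.ofPred_exists]
  refine .iUnion fun n => ?_
  have hrestrict : Measurable fun (ω : ℕ → ESym L) (i : Fin n) => ω i :=
    measurable_pi_lambda _ fun i => measurable_pi_apply (i : ℕ)
  exact hrestrict (Set.to_countable {x : Fin n → ESym L | P n (List.ofFn x)}).measurableSet

lemma measurableSet_fiberEvent [Countable L] (T : EType) (i j : ℕ) :
    MeasurableSet (fiberEvent N a b T i j) :=
  measurableSet_exists_pref fun _ l => (consumedA l).length = i ∧ (consumedB l).length = j ∧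
    lastType l = T ∧ AgreesWith (consumedA l) a (min i N) ∧ AgreesWith (consumedB l) b (min j N)

variable [Countable L] (Q : Measure (ℕ → ESym L))

theorem measure_rowEvent (hN : 1 ≤ N) : Q (rowEvent N a b) =
    ∑' j, (Q (fiberEvent N a b .S N (N + j)) + Q (fiberEvent N a b .D N (N + j))) := by
  rw [rowEvent, measure_iUnion _ fun j => (measurableSet_fiberEvent _ _ _).union
    (measurableSet_fiberEvent _ _ _)]
  · congr with j
    refine measure_union (Set.disjoint_left.mpr fun ω h h' => ?_) (measurableSet_fiberEvent _ _ _)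
    simpa using (eq_of_mem_fiberEvent_row hN (by simp) (by simp) h h').1
  · refine fun j j' hne => Set.disjoint_left.mpr fun ω h h' => hne ?_
    rcases h with h | h <;> rcases h' with h' | h' <;>
      exact Nat.add_left_cancel (eq_of_mem_fiberEvent_row hN (by simp) (by simp) h h').2

theorem measure_columnEvent (hN : 1 ≤ N) : Q (columnEvent N a b) =
    ∑' i, (Q (fiberEvent N a b .S (N + i) N) + Q (fiberEvent N a b .I (N + i) N)) := by
  rw [columnEvent, measure_iUnion _ fun i => (measurableSet_fiberEvent _ _ _).union
    (measurableSet_fiberEvent _ _ _)]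
  · congr with i
    refine measure_union (Set.disjoint_left.mpr fun ω h h' => ?_) (measurableSet_fiberEvent _ _ _)
    simpa using (eq_of_mem_fiberEvent_column hN (by simp) (by simp) h h').1
  · refine fun i i' hne => Set.disjoint_left.mpr fun ω h h' => hne ?_
    rcases h with h | h <;> rcases h' with h' | h' <;>
      exact Nat.add_left_cancel (eq_of_mem_fiberEvent_column hN (by simp) (by simp) h h').2

end EditWord

open EditWord

theorem stmt_12_general {L : Type*} [Fintype L]
    (Q : Measure (ℕ → ESym L))
    (N : ℕ) (hN : 1 ≤ N) (a b : ℕ → L)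
    -- the events `E^T_{i,j}` and their probabilities `Q^T_{i,j}`
    (QT : EType → ℕ → ℕ → ℝ≥0∞)
    (hQT : ∀ T i j, QT T i j = Q {ω | ∃ n : ℕ,
      (consumedA (pref ω n)).length = i ∧
      (consumedB (pref ω n)).length = j ∧
      lastType (pref ω n) = T ∧
      (consumedA (pref ω n)).take (min i N) = (List.range (min i N)).map (fun m => a (m + 1)) ∧
      (consumedB (pref ω n)).take (min j N) = (List.range (min j N)).map (fun m => b (m + 1))}) :
    Q {ω | ∃ n : ℕ, N ≤ (consumedA (pref ω n)).length ∧ N ≤ (consumedB (pref ω n)).length ∧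
        (consumedA (pref ω n)).take N = (List.range N).map (fun m => a (m + 1)) ∧
        (consumedB (pref ω n)).take N = (List.range N).map (fun m => b (m + 1))}
      + QT .S N N
      = (∑' j : ℕ, (QT .S N (N + j) + QT .D N (N + j)))
        + (∑' i : ℕ, (QT .S (N + i) N + QT .I (N + i) N)) := by
  have hQT' : ∀ T i j, QT T i j = Q (fiberEvent N a b T i j) := hQT
  change Q (prefixEvent N a b) + _ = _
  simp only [hQT']
  rw [← measure_rowEvent Q hN, ← measure_columnEvent Q hN, ← rowEvent_inter_columnEvent hN,
    prefixEvent_eq_rowEvent_union_columnEvent hN]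
  exact measure_union_add_inter _
    (.iUnion fun _ => (measurableSet_fiberEvent _ _ _).union (measurableSet_fiberEvent _ _ _))

/-- Fiber decomposition (equation (2.7)): decomposing the cylinder event that the
consumed `A`- and `B`-letters begin with the prefixes `a[1,N]`, `b[1,N]` according to
where the alignment path hits the rays `I_{N,N} ∪ D_{N,N}` and the type of its last
transition. Stated additively in `[0,∞]`: `Q(G) + Q^S_{N,N} = Σ_{j≥N}(Q^S_{N,j}+Q^D_{N,j})
+ Σ_{i≥N}(Q^S_{i,N}+Q^I_{i,N})`. -/
theorem stmt_12 {L : Type*} [Fintype L]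
    (t : EType → EType → ℝ) (ht0 : ∀ T T', 0 ≤ t T T')
    (ht1 : ∀ T, t T .S + t T .I + t T .D = 1)
    (q : L → L → ℝ) (hq0 : ∀ a b, 0 ≤ q a b) (hq1 : ∑ a, ∑ b, q a b = 1)
    (p' : L → ℝ) (hp'0 : ∀ b, 0 ≤ p' b) (hp'1 : ∑ b, p' b = 1)
    (p : L → ℝ) (hp0 : ∀ a, 0 ≤ p a) (hp1 : ∑ a, p a = 1)
    (Q : Measure (ℕ → ESym L)) (hQprob : IsProbabilityMeasure Q)
    -- cylinder probabilities of the Markov chain of edit symbols started from `S`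
    (hQ : ∀ e : List (ESym L),
      Q {ω | pref ω e.length = e} = ENNReal.ofReal (wordWeight t q p' p EType.S e))
    (N : ℕ) (hN : 1 ≤ N) (a b : ℕ → L)
    -- the events `E^T_{i,j}` and their probabilities `Q^T_{i,j}`
    (QT : EType → ℕ → ℕ → ℝ≥0∞)
    (hQT : ∀ T i j, QT T i j = Q {ω | ∃ n : ℕ,
      (consumedA (pref ω n)).length = i ∧
      (consumedB (pref ω n)).length = j ∧
      lastType (pref ω n) = T ∧
      (consumedA (pref ω n)).take (min i N) = (List.range (min i N)).map (fun m => a (m + 1)) ∧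
      (consumedB (pref ω n)).take (min j N) = (List.range (min j N)).map (fun m => b (m + 1))})
    -- almost surely, both consumption counts tend to infinity
    (has : ∀ᵐ ω ∂Q,
      Filter.Tendsto (fun n => (consumedA (pref ω n)).length) Filter.atTop Filter.atTop ∧
      Filter.Tendsto (fun n => (consumedB (pref ω n)).length) Filter.atTop Filter.atTop) :
    Q {ω | ∃ n : ℕ, N ≤ (consumedA (pref ω n)).length ∧ N ≤ (consumedB (pref ω n)).length ∧
        (consumedA (pref ω n)).take N = (List.range N).map (fun m => a (m + 1)) ∧
        (consumedB (pref ω n)).take N = (List.range N).map (fun m => b (m + 1))}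
      + QT .S N N
      = (∑' j : ℕ, (QT .S N (N + j) + QT .D N (N + j)))
        + (∑' i : ℕ, (QT .S (N + i) N + QT .I (N + i) N)) :=
  stmt_12_general Q N hN a b QT hQT
end

section
/- For Δ₀, Δ₁ ≥ 0 and every (i,j) with i + j ≥ 1, the maximum weight over ALL directed paths from (0,0) to (i,j) in the alignment graph (with no restriction on consecutive edge directions) equals max{ S_{i,j}, I_{i,j}, D_{i,j} }; that is, restricting to alignment paths (no two consecutive north edges, no two consecutive east edges, and no east edge immediately following a north edge) does not change the optimal global score. (The proof uses that the affine gap penalty is subadditive, w_{g+h} ≤ w_g + w_h, since Δ₀ ≥ 0, and that a north edge followed by an east edge can be replaced by the east edge followed by the north edge with the same total weight.) -/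
/-- A move (edge) in the alignment graph: a diagonal edge, a north edge of length
`g + 1`, or an east edge of length `g + 1` (so that all gap lengths are `≥ 1`). -/
inductive Move : Type
  | diag : Move
  | north (g : ℕ) : Move
  | east (g : ℕ) : Move

/-- The endpoint of a path, given its starting vertex and its list of moves. -/
def endpt : ℕ × ℕ → List Move → ℕ × ℕ
  | pt, [] => pt
  | (i, j), Move.diag :: l => endpt (i + 1, j + 1) l
  | (i, j), Move.north g :: l => endpt (i, j + (g + 1)) l
  | (i, j), Move.east g :: l => endpt (i + (g + 1), j) l

/-- The weight of a path: diagonal edges into `(i,j)` score `s(A_i, B_j)`, while a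
north or east edge of length `g` scores `−(Δ₀ + Δ₁ g)`. -/
noncomputable def pweight {L : Type*} (A B : ℕ → L) (s : L → L → ℝ) (Δ₀ Δ₁ : ℝ) :
    ℕ × ℕ → List Move → ℝ
  | _, [] => 0
  | (i, j), Move.diag :: l =>
      s (A (i + 1)) (B (j + 1)) + pweight A B s Δ₀ Δ₁ (i + 1, j + 1) l
  | (i, j), Move.north g :: l =>
      -(Δ₀ + Δ₁ * (g + 1)) + pweight A B s Δ₀ Δ₁ (i, j + (g + 1)) l
  | (i, j), Move.east g :: l =>
      -(Δ₀ + Δ₁ * (g + 1)) + pweight A B s Δ₀ Δ₁ (i + (g + 1), j) l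

/-- Allowed consecutive pairs of moves in an alignment path: no two consecutive
north edges, no two consecutive east edges, and no east edge immediately
following a north edge. -/
def okPair : Move → Move → Prop
  | Move.north _, Move.north _ => False
  | Move.east _, Move.east _ => False
  | Move.north _, Move.east _ => False
  | _, _ => True

/-- An alignment path: every pair of consecutive moves is allowed. -/
def alignedPath (l : List Move) : Prop := List.Chain' okPair l

/-- `Sval A B s Δ₀ Δ₁ i j`: the maximum weight (in `ℝ ∪ {±∞}`, with `sSup ∅ = ⊥`)
of an alignment path from `(0,0)` to `(i,j)` whose last edge is diagonal, with the
convention that the empty path (of weight `0`) is included at `(0,0)`. -/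
noncomputable def Sval {L : Type*} (A B : ℕ → L) (s : L → L → ℝ) (Δ₀ Δ₁ : ℝ)
    (i j : ℕ) : EReal :=
  sSup {x : EReal | ∃ l : List Move, alignedPath l ∧ endpt (0, 0) l = (i, j) ∧
    (l = [] ∨ ∃ l', l = l' ++ [Move.diag]) ∧ x = (pweight A B s Δ₀ Δ₁ (0, 0) l : ℝ)}

/-- `Ival A B s Δ₀ Δ₁ i j`: the maximum weight of an alignment path from `(0,0)`
to `(i,j)` whose last edge is a north edge. -/
noncomputable def Ival {L : Type*} (A B : ℕ → L) (s : L → L → ℝ) (Δ₀ Δ₁ : ℝ)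
    (i j : ℕ) : EReal :=
  sSup {x : EReal | ∃ (l l' : List Move) (g : ℕ), alignedPath l ∧
    endpt (0, 0) l = (i, j) ∧ l = l' ++ [Move.north g] ∧
    x = (pweight A B s Δ₀ Δ₁ (0, 0) l : ℝ)}

/-- `Dval A B s Δ₀ Δ₁ i j`: the maximum weight of an alignment path from `(0,0)`
to `(i,j)` whose last edge is an east edge. -/
noncomputable def Dval {L : Type*} (A B : ℕ → L) (s : L → L → ℝ) (Δ₀ Δ₁ : ℝ)
    (i j : ℕ) : EReal :=
  sSup {x : EReal | ∃ (l l' : List Move) (g : ℕ), alignedPath l ∧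
    endpt (0, 0) l = (i, j) ∧ l = l' ++ [Move.east g] ∧
    x = (pweight A B s Δ₀ Δ₁ (0, 0) l : ℝ)}


/-- `Mval A B s Δ₀ Δ₁ i j`: the maximum weight over ALL directed paths from `(0,0)`
to `(i,j)` in the alignment graph, with no restriction on consecutive edges. -/
noncomputable def Mval {L : Type*} (A B : ℕ → L) (s : L → L → ℝ) (Δ₀ Δ₁ : ℝ)
    (i j : ℕ) : EReal :=
  sSup {x : EReal | ∃ l : List Move, endpt (0, 0) l = (i, j) ∧
    x = (pweight A B s Δ₀ Δ₁ (0, 0) l : ℝ)}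

/-!
Any path can be turned into an alignment path with the same endpoint and at least the same
weight, by inserting its moves one at a time, from the last to the first, in front of an
alignment path. A gap landing in front of a gap of the same direction merges with it, which
does not decrease the weight because `w_{g+h} ≤ w_g + w_h` when `Δ₀ ≥ 0`; a north gap landing
in front of an east gap is pushed past it, which keeps the weight since gap penalties do not
depend on their position.
-/

def alignCons : Move → List Move → List Move
  | Move.diag, l => Move.diag :: l
  | Move.north g, [] => [Move.north g]
  | Move.north g, Move.diag :: t => Move.north g :: Move.diag :: t
  | Move.north g, Move.north h :: t => Move.north (g + h + 1) :: t
  | Move.north g, Move.east h :: t => Move.east h :: alignCons (Move.north g) t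
  | Move.east g, [] => [Move.east g]
  | Move.east g, Move.diag :: t => Move.east g :: Move.diag :: t
  | Move.east g, Move.north h :: t => Move.east g :: Move.north h :: t
  | Move.east g, Move.east h :: t => Move.east (g + h + 1) :: t

def toAligned (l : List Move) : List Move := l.foldr alignCons []

lemma alignCons_ne_nil (m : Move) (l : List Move) : alignCons m l ≠ [] := by
  induction m, l using alignCons.induct <;> simp [alignCons]

lemma toAligned_ne_nil {l : List Move} (hl : l ≠ []) : toAligned l ≠ [] := by
  obtain ⟨m, t, rfl⟩ := List.exists_cons_of_ne_nil hl
  exact alignCons_ne_nil m _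

lemma head?_alignCons_north (g : ℕ) {l : List Move}
    (hl : ∀ h, l.head? ≠ some (Move.east h)) :
    ∃ g', (alignCons (Move.north g) l).head? = some (Move.north g') := by
  match l with
  | [] => exact ⟨g, rfl⟩
  | Move.diag :: _ => exact ⟨g, rfl⟩
  | Move.north h :: _ => exact ⟨g + h + 1, rfl⟩
  | Move.east h :: _ => exact absurd rfl (hl h)

lemma alignedPath_alignCons (m : Move) {l : List Move} (hl : alignedPath l) :
    alignedPath (alignCons m l) := by
  unfold alignedPath at *
  induction m, l using alignCons.induct with
  | case5 g h t ih =>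
    obtain ⟨hhead, ht⟩ := List.isChain_cons.mp hl
    obtain ⟨g', hg'⟩ := head?_alignCons_north g (l := t) fun h' hh => hhead _ hh
    refine List.isChain_cons.mpr ⟨fun y hy => ?_, ih ht⟩
    rw [hg', Option.mem_some_iff] at hy
    subst hy
    trivial
  | case4 | case9 =>
    obtain ⟨hhead, ht⟩ := List.isChain_cons.mp hl
    refine List.isChain_cons.mpr ⟨fun y hy => ?_, ht⟩
    cases y <;> exact hhead _ hy
  | _ =>
    simp only [alignCons]
    exact List.isChain_cons.mpr ⟨fun y hy => by cases y <;> simp_all [okPair], hl⟩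

lemma endpt_alignCons (m : Move) (l : List Move) (pt : ℕ × ℕ) :
    endpt pt (alignCons m l) = endpt pt (m :: l) := by
  induction m, l using alignCons.induct generalizing pt with
  | case4 | case9 =>
    obtain ⟨i, j⟩ := pt
    simp only [alignCons, endpt]
    congr 2
    omega
  | case5 g h t ih =>
    obtain ⟨i, j⟩ := pt
    simp only [alignCons, endpt, ih]
  | _ => simp only [alignCons]

lemma endpt_toAligned (l : List Move) (pt : ℕ × ℕ) : endpt pt (toAligned l) = endpt pt l := by
  induction l generalizing pt with
  | nil => rfl
  | cons m l ih =>
    obtain ⟨i, j⟩ := pt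
    rw [toAligned, List.foldr_cons, endpt_alignCons]
    cases m <;> exact ih _

lemma alignedPath_toAligned (l : List Move) : alignedPath (toAligned l) := by
  induction l with
  | nil => exact List.isChain_nil
  | cons m l ih => exact alignedPath_alignCons m ih

section Weight

variable {L : Type*} (A B : ℕ → L) (s : L → L → ℝ) {Δ₀ Δ₁ : ℝ}

lemma pweight_cons_le_pweight_alignCons (hΔ₀ : 0 ≤ Δ₀) (m : Move) (l : List Move)
    (pt : ℕ × ℕ) :
    pweight A B s Δ₀ Δ₁ pt (m :: l) ≤ pweight A B s Δ₀ Δ₁ pt (alignCons m l) := by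
  induction m, l using alignCons.induct generalizing pt with
  | case4 g h t | case9 g h t =>
    obtain ⟨i, j⟩ := pt
    simp only [alignCons, pweight, show ∀ k, k + (g + 1) + (h + 1) = k + (g + h + 1 + 1) by omega]
    push_cast
    linarith
  | case5 g h t ih =>
    obtain ⟨i, j⟩ := pt
    have := ih (i + (h + 1), j)
    simp only [alignCons, pweight] at this ⊢
    linarith
  | _ => simp only [alignCons, le_refl]

lemma pweight_le_pweight_toAligned (hΔ₀ : 0 ≤ Δ₀) (l : List Move) (pt : ℕ × ℕ) :
    pweight A B s Δ₀ Δ₁ pt l ≤ pweight A B s Δ₀ Δ₁ pt (toAligned l) := by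
  induction l generalizing pt with
  | nil => rfl
  | cons m l ih =>
    obtain ⟨i, j⟩ := pt
    refine le_trans ?_ (pweight_cons_le_pweight_alignCons A B s hΔ₀ m _ _)
    cases m <;> exact add_le_add_right (ih _) _

lemma coe_pweight_le_max_Sval_Ival_Dval {l : List Move} {i j : ℕ} (hal : alignedPath l)
    (hne : l ≠ []) (hend : endpt (0, 0) l = (i, j)) :
    (pweight A B s Δ₀ Δ₁ (0, 0) l : EReal)
      ≤ max (max (Sval A B s Δ₀ Δ₁ i j) (Ival A B s Δ₀ Δ₁ i j)) (Dval A B s Δ₀ Δ₁ i j) := by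
  obtain ⟨l', m, rfl⟩ := (List.eq_nil_or_concat l).resolve_left hne
  rw [List.concat_eq_append] at hal hend ⊢
  cases m with
  | diag =>
    exact le_max_of_le_left <| le_max_of_le_left <| le_sSup ⟨_, hal, hend, .inr ⟨l', rfl⟩, rfl⟩
  | north g =>
    exact le_max_of_le_left <| le_max_of_le_right <| le_sSup ⟨_, l', g, hal, hend, rfl, rfl⟩
  | east g => exact le_max_of_le_right <| le_sSup ⟨_, l', g, hal, hend, rfl, rfl⟩

variable {A B s}

lemma Sval_le_Mval (i j : ℕ) : Sval A B s Δ₀ Δ₁ i j ≤ Mval A B s Δ₀ Δ₁ i j :=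
  sSup_le_sSup fun _ ⟨l, _, hend, _, hx⟩ => ⟨l, hend, hx⟩

lemma Ival_le_Mval (i j : ℕ) : Ival A B s Δ₀ Δ₁ i j ≤ Mval A B s Δ₀ Δ₁ i j :=
  sSup_le_sSup fun _ ⟨l, _, _, _, hend, _, hx⟩ => ⟨l, hend, hx⟩

lemma Dval_le_Mval (i j : ℕ) : Dval A B s Δ₀ Δ₁ i j ≤ Mval A B s Δ₀ Δ₁ i j :=
  sSup_le_sSup fun _ ⟨l, _, _, _, hend, _, hx⟩ => ⟨l, hend, hx⟩

end Weight

theorem stmt_14_general {L : Type*} (A B : ℕ → L) (s : L → L → ℝ)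
    (Δ₀ Δ₁ : ℝ) (hΔ₀ : 0 ≤ Δ₀) :
    ∀ i j : ℕ, 1 ≤ i + j →
      Mval A B s Δ₀ Δ₁ i j
        = max (max (Sval A B s Δ₀ Δ₁ i j) (Ival A B s Δ₀ Δ₁ i j))
            (Dval A B s Δ₀ Δ₁ i j) := by
  intro i j hij
  refine le_antisymm (sSup_le ?_)
    (max_le (max_le (Sval_le_Mval i j) (Ival_le_Mval i j)) (Dval_le_Mval i j))
  rintro _ ⟨l, hend, rfl⟩
  have hne : l ≠ [] := by
    rintro rfl
    simp only [endpt, Prod.mk.injEq] at hend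
    omega
  exact (EReal.coe_le_coe_iff.mpr (pweight_le_pweight_toAligned A B s hΔ₀ l _)).trans <|
    coe_pweight_le_max_Sval_Ival_Dval A B s (alignedPath_toAligned l) (toAligned_ne_nil hne)
      ((endpt_toAligned l _).trans hend)

/-- Restricting to alignment paths does not change the optimal global score:
for every `(i,j)` with `i + j ≥ 1`, the maximum weight over all directed paths from
`(0,0)` to `(i,j)` equals `max{S_{i,j}, I_{i,j}, D_{i,j}}`. -/
theorem stmt_14 {L : Type*} [Fintype L] (A B : ℕ → L) (s : L → L → ℝ)
    (Δ₀ Δ₁ : ℝ) (hΔ₀ : 0 ≤ Δ₀) (hΔ₁ : 0 ≤ Δ₁) :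
    ∀ i j : ℕ, 1 ≤ i + j →
      Mval A B s Δ₀ Δ₁ i j
        = max (max (Sval A B s Δ₀ Δ₁ i j) (Ival A B s Δ₀ Δ₁ i j))
            (Dval A B s Δ₀ Δ₁ i j) :=
  stmt_14_general A B s Δ₀ Δ₁ hΔ₀
end
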